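/- arXiv:1705.07264 — 8 statements merged into one kernel-verified Lean document; each statement's English description precedes it below -/
import Mathlib

section
/- Let G be a topologically finitely generated profinite group. Then for every positive integer n, G has only finitely many open subgroups of index n. -/
/-!
An open subgroup `H` of index `n` is recovered from the action of `G` on `G ⧸ H ≅ Fin n`
together with the point of `Fin n` corresponding to the coset `H`. Since `G ⧸ H` is discrete,
this action is continuous, so it is determined by the permutations assigned to a finite
topological generating set `T`. Hence there are at most `(n!) ^ |T| * n` such subgroups.
-/

namespace Subgroup

variable {G α : Type*} [Group G]

noncomputable def quotientPermRep (H : Subgroup G) (e : G ⧸ H ≃ α) : G →* Equiv.Perm α :=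
  e.permCongrHom.toMonoidHom.comp (MulAction.toPermHom G (G ⧸ H))

theorem quotientPermRep_apply (H : Subgroup G) (e : G ⧸ H ≃ α) (g : G) (a : α) :
    H.quotientPermRep e g a = e (g • e.symm a) := rfl

theorem mem_iff_quotientPermRep_apply_eq (H : Subgroup G) (e : G ⧸ H ≃ α) (g : G) :
    g ∈ H ↔ H.quotientPermRep e g (e (1 : G)) = e (1 : G) := by
  rw [quotientPermRep_apply, e.symm_apply_apply, e.apply_eq_iff_eq, MulAction.Quotient.smul_mk,
    smul_eq_mul, mul_one, QuotientGroup.eq, mul_one, inv_mem_iff]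

theorem eq_of_quotientPermRep_eq {H K : Subgroup G} {eH : G ⧸ H ≃ α} {eK : G ⧸ K ≃ α}
    (hrep : H.quotientPermRep eH = K.quotientPermRep eK) (hbase : eH (1 : G) = eK (1 : G)) :
    H = K := by
  ext g
  rw [mem_iff_quotientPermRep_apply_eq H eH, mem_iff_quotientPermRep_apply_eq K eK, hrep, hbase]

variable [TopologicalSpace G] [IsTopologicalGroup G]

theorem continuous_quotientPermRep_apply [TopologicalSpace α] [DiscreteTopology α]
    {H : Subgroup G} (hH : IsOpen (H : Set G)) (e : G ⧸ H ≃ α) (a : α) :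
    Continuous fun g => H.quotientPermRep e g a := by
  have := QuotientGroup.discreteTopology hH
  exact continuous_of_discreteTopology.comp (continuous_id.smul continuous_const)

end Subgroup

theorem MonoidHom.eq_of_eqOn_of_topologicalClosure_eq_top {G α : Type*} [Group G]
    [TopologicalSpace G] [IsTopologicalGroup G] [TopologicalSpace α] [T2Space α]
    {φ ψ : G →* Equiv.Perm α} (hφ : ∀ a, Continuous fun g => φ g a)
    (hψ : ∀ a, Continuous fun g => ψ g a) {s : Set G}
    (hs : (Subgroup.closure s).topologicalClosure = ⊤) (h : s.EqOn φ ψ) : φ = ψ := by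
  have hdense : Dense (Subgroup.closure s : Set G) := by
    rw [dense_iff_closure_eq, ← Subgroup.topologicalClosure_coe, hs, Subgroup.coe_top]
  have hclosure := MonoidHom.eqOn_closure h
  ext g a
  exact congrFun (Continuous.ext_on hdense (hφ a) (hψ a) fun x hx => by rw [hclosure hx]) g

theorem finite_openSubgroups_of_index_general
    (G : Type*) [Group G] [TopologicalSpace G] [IsTopologicalGroup G]
    (hfg : ∃ T : Finset G, (Subgroup.closure (T : Set G)).topologicalClosure = ⊤)
    (n : ℕ) (hn : 0 < n) :
    {H : Subgroup G | IsOpen (H : Set G) ∧ H.index = n}.Finite := by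
  obtain ⟨T, hT⟩ := hfg
  let S := {H : Subgroup G | IsOpen (H : Set G) ∧ H.index = n}
  let e (H : S) : G ⧸ (H : Subgroup G) ≃ Fin n :=
    (Nat.equivFinOfCardPos (H.2.2.symm ▸ hn.ne' : (H : Subgroup G).index ≠ 0)).trans
      (finCongr H.2.2)
  refine Set.finite_coe_iff.mp <| Finite.of_injective
    (fun H : S => ((fun t : T => (H : Subgroup G).quotientPermRep (e H) t), e H (1 : G))) ?_
  rintro ⟨H, hH⟩ ⟨K, hK⟩ hHK
  obtain ⟨hgen, hbase⟩ := Prod.ext_iff.mp hHK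
  refine Subtype.ext (Subgroup.eq_of_quotientPermRep_eq ?_ hbase)
  exact MonoidHom.eq_of_eqOn_of_topologicalClosure_eq_top
    (Subgroup.continuous_quotientPermRep_apply hH.1 _)
    (Subgroup.continuous_quotientPermRep_apply hK.1 _) hT fun t ht => congrFun hgen ⟨t, ht⟩

/-- A topologically finitely generated profinite group has only finitely many
open subgroups of each finite index `n`. -/
theorem finite_openSubgroups_of_index
    (G : Type*) [Group G] [TopologicalSpace G] [IsTopologicalGroup G]
    [CompactSpace G] [T2Space G] [TotallyDisconnectedSpace G]
    (hfg : ∃ T : Finset G, (Subgroup.closure (T : Set G)).topologicalClosure = ⊤)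
    (n : ℕ) (hn : 0 < n) :
    {H : Subgroup G | IsOpen (H : Set G) ∧ H.index = n}.Finite :=
  finite_openSubgroups_of_index_general G hfg n hn
end

section
/- Every open subgroup of a topologically finitely generated profinite group is itself topologically finitely generated. -/
/-!
An open subgroup `H` of a compact group has finite index. If the subgroup `D` generated by a
finite set is dense, Schreier's lemma makes `H ⊓ D` finitely generated, and `H ⊓ D` is dense in
`H` because `H` is open; as `H` is also closed, `H` is the closure of `H ⊓ D`.
-/

namespace Subgroup

variable {G : Type*} [Group G]

theorem FG.inf_of_finiteIndex {D : Subgroup G} (hD : D.FG) (H : Subgroup G) [H.FiniteIndex] :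
    (H ⊓ D).FG := by
  have : Group.FG D := (Group.fg_iff_subgroup_fg D).mpr hD
  obtain ⟨S, hS⟩ := (Group.fg_iff_subgroup_fg (H.subgroupOf D)).mp inferInstance
  classical
  refine ⟨S.image D.subtype, ?_⟩
  rw [Finset.coe_image, ← MonoidHom.map_closure, hS, subgroupOf_map_subtype]

variable [TopologicalSpace G] [IsTopologicalGroup G]

theorem topologicalClosure_inf_eq_of_isOpen_of_dense {H D : Subgroup G}
    (hH : IsOpen (H : Set G)) (hD : Dense (D : Set G)) : (H ⊓ D).topologicalClosure = H := by
  refine SetLike.coe_injective (subset_antisymm ?_ ?_)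
  · exact closure_minimal Set.inter_subset_left (H.isClosed_of_isOpen hH)
  · exact hD.open_subset_closure_inter hH

end Subgroup

theorem openSubgroup_topologically_finitelyGenerated_general
    (G : Type*) [Group G] [TopologicalSpace G] [IsTopologicalGroup G]
    [CompactSpace G]
    (hfg : ∃ T : Finset G, (Subgroup.closure (T : Set G)).topologicalClosure = ⊤)
    (H : Subgroup G) (hH : IsOpen (H : Set G)) :
    ∃ T : Finset G, (Subgroup.closure (T : Set G)).topologicalClosure = H := by
  obtain ⟨T, hT⟩ := hfg
  have hdense : Dense (Subgroup.closure (T : Set G) : Set G) := by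
    rw [dense_iff_closure_eq, ← Subgroup.topologicalClosure_coe, hT, Subgroup.coe_top]
  have : Finite (G ⧸ H) := H.quotient_finite_of_isOpen hH
  have : H.FiniteIndex := Subgroup.finiteIndex_of_finite_quotient
  obtain ⟨S, hS⟩ := Subgroup.FG.inf_of_finiteIndex ⟨T, rfl⟩ H
  exact ⟨S, hS ▸ Subgroup.topologicalClosure_inf_eq_of_isOpen_of_dense hH hdense⟩

/-- Every open subgroup of a topologically finitely generated profinite group is
itself topologically finitely generated. -/
theorem openSubgroup_topologically_finitelyGenerated
    (G : Type*) [Group G] [TopologicalSpace G] [IsTopologicalGroup G]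
    [CompactSpace G] [T2Space G] [TotallyDisconnectedSpace G]
    (hfg : ∃ T : Finset G, (Subgroup.closure (T : Set G)).topologicalClosure = ⊤)
    (H : Subgroup G) (hH : IsOpen (H : Set G)) :
    ∃ T : Finset G, (Subgroup.closure (T : Set G)).topologicalClosure = H :=
  openSubgroup_topologically_finitelyGenerated_general G hfg H hH
end

section
/- Let G be a profinite group and H ≤ G an abstract subgroup of finite index. Then the index |G:H| (as a natural number) divides the order of G as a supernatural number, i.e., for every prime p, the p-adic valuation of |G:H| is at most the exponent of p in the supernatural order of G. -/
/-! If the exponent `n` of `p` in `|G|` is finite, it is attained at some open normal subgroup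
`N₀`. By maximality, every open subgroup of `N₀` has index prime to `p`, so by compactness the
`p`-th power map of `N₀` is surjective: its image is closed and meets every coset of every open
normal subgroup. By Cauchy's theorem a group with surjective `p`-th power map has no finite
quotient of order divisible by `p`, hence `p ∤ |N₀ : H ∩ N₀|` and
`v_p |G : H| ≤ v_p |G : H ∩ N₀| = v_p |G : N₀| = n`. -/

open scoped ENat

/-- The supernatural order of a profinite group `G` at the prime `p`: the
supremum over open normal subgroups `N` of the exponent of `p` in `|G/N|`. -/
noncomputable def supernaturalOrderExp (G : Type*) [Group G] [TopologicalSpace G] (p : ℕ) : ℕ∞ :=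
  ⨆ N ∈ {N : Subgroup G | N.Normal ∧ IsOpen (N : Set G)},
    ((N.index.factorization p : ℕ) : ℕ∞)

section Index

variable {Γ : Type*} [Group Γ]

theorem Subgroup.factorization_index_of_le {M N : Subgroup Γ} (hMN : M ≤ N) (hM : M.index ≠ 0)
    (p : ℕ) :
    M.index.factorization p = (M.relIndex N).factorization p + N.index.factorization p := by
  rw [← Subgroup.relIndex_mul_index hMN] at hM ⊢
  rw [Nat.factorization_mul (left_ne_zero_of_mul hM) (right_ne_zero_of_mul hM)]
  rfl

theorem Subgroup.factorization_index_le_of_not_dvd_relIndex {H N : Subgroup Γ}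
    (hH : H.index ≠ 0) (hN : N.index ≠ 0) {p : ℕ} (hp : ¬ p ∣ H.relIndex N) :
    H.index.factorization p ≤ N.index.factorization p := by
  have : H.FiniteIndex := ⟨hH⟩
  have : N.FiniteIndex := ⟨hN⟩
  have hHN : (H ⊓ N).index ≠ 0 := Subgroup.FiniteIndex.index_ne_zero
  calc H.index.factorization p ≤ (H ⊓ N).index.factorization p :=
        (Nat.factorization_le_iff_dvd hH hHN).mpr (Subgroup.index_dvd_of_le inf_le_left) p
    _ = N.index.factorization p := by
        rw [Subgroup.factorization_index_of_le inf_le_right hHN, Subgroup.inf_relIndex_right,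
          Nat.factorization_eq_zero_of_not_dvd hp, zero_add]

theorem not_dvd_card_of_pow_surjective [Finite Γ] {p : ℕ} (hp : p.Prime)
    (h : Function.Surjective (· ^ p : Γ → Γ)) : ¬ p ∣ Nat.card Γ := by
  intro hdvd
  have := Fact.mk hp
  obtain ⟨x, hx⟩ := exists_prime_orderOf_dvd_card' p hdvd
  have hx1 : x = 1 :=
    Finite.injective_iff_surjective.mpr h (by simp only [← hx, pow_orderOf_eq_one, one_pow])
  rw [hx1, orderOf_one] at hx
  exact hp.ne_one hx.symm

theorem Subgroup.not_dvd_index_of_pow_surjective {p : ℕ} (hp : p.Prime)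
    (h : Function.Surjective (· ^ p : Γ → Γ)) (K : Subgroup Γ) (hK : K.index ≠ 0) :
    ¬ p ∣ K.index := by
  have : K.FiniteIndex := ⟨hK⟩
  have : Finite (Γ ⧸ K.normalCore) := K.normalCore.finite_quotient_of_finiteIndex
  have hsurj : Function.Surjective (· ^ p : Γ ⧸ K.normalCore → Γ ⧸ K.normalCore) := by
    intro q
    obtain ⟨a, rfl⟩ := QuotientGroup.mk_surjective q
    obtain ⟨g, rfl⟩ := h a
    exact ⟨g, rfl⟩
  refine fun hdvd => not_dvd_card_of_pow_surjective hp hsurj ?_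
  rw [← Subgroup.index_eq_card]
  exact hdvd.trans (Subgroup.index_dvd_of_le K.normalCore_le)

end Index

section Profinite

variable {Γ : Type*} [Group Γ] [TopologicalSpace Γ] [IsTopologicalGroup Γ]
    [CompactSpace Γ] [TotallyDisconnectedSpace Γ]

theorem pow_surjective_of_forall_coprime_index {n : ℕ}
    (h : ∀ N : OpenNormalSubgroup Γ, N.toSubgroup.index.Coprime n) :
    Function.Surjective (· ^ n : Γ → Γ) := by
  intro a
  have hclosed : IsClosed (Set.range (· ^ n : Γ → Γ)) :=
    (isCompact_range (continuous_pow n)).isClosed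
  suffices a ∈ closure (Set.range (· ^ n : Γ → Γ)) by rwa [hclosed.closure_eq] at this
  refine mem_closure_iff.mpr fun U hU haU => ?_
  obtain ⟨N, hN⟩ := ProfiniteGrp.exist_openNormalSubgroup_sub_open_nhds_of_one
    (U := (a * ·) ⁻¹' U) (hU.preimage (continuous_const_mul a))
    (by simpa only [Set.mem_preimage, mul_one] using haU)
  have hcop : (Nat.card (Γ ⧸ N.toSubgroup)).Coprime n := by
    rw [← Subgroup.index_eq_card]; exact h N
  obtain ⟨q, hq⟩ := hcop.pow_left_bijective.surjective (a : Γ ⧸ N.toSubgroup)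
  obtain ⟨g, rfl⟩ := QuotientGroup.mk_surjective q
  have hmem : a⁻¹ * g ^ n ∈ N := QuotientGroup.eq.mp hq.symm
  exact ⟨g ^ n, by simpa using hN hmem, g, rfl⟩

theorem OpenSubgroup.coprime_index_of_forall_factorization_le {p : ℕ} (hp : p.Prime)
    (N₀ : OpenSubgroup Γ)
    (hmax : ∀ M : OpenNormalSubgroup Γ, M.toSubgroup ≤ N₀.toSubgroup →
      M.toSubgroup.index.factorization p ≤ N₀.toSubgroup.index.factorization p)
    (W : OpenSubgroup N₀.toSubgroup) : W.toSubgroup.index.Coprime p := by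
  obtain ⟨M, hMW⟩ := ProfiniteGrp.exist_openNormalSubgroup_sub_open_nhds_of_one
    (N₀.isOpen.isOpenMap_subtype_val _ W.isOpen) ⟨1, W.one_mem, rfl⟩
  have hMN₀ : M.toSubgroup ≤ N₀.toSubgroup := fun x hx => by
    obtain ⟨y, -, rfl⟩ := hMW hx
    exact y.2
  have hMW' : M.toSubgroup.subgroupOf N₀.toSubgroup ≤ W.toSubgroup := fun x hx => by
    obtain ⟨y, hy, hyx⟩ := hMW hx
    exact Subtype.val_injective hyx ▸ hy
  have hM : M.toSubgroup.index ≠ 0 := Subgroup.index_ne_zero_of_finite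
  have hrel : ¬ p ∣ M.toSubgroup.relIndex N₀.toSubgroup := by
    intro hdvd
    have := hp.factorization_pos_of_dvd
      (left_ne_zero_of_mul (Subgroup.relIndex_mul_index hMN₀ ▸ hM)) hdvd
    have := Subgroup.factorization_index_of_le hMN₀ hM p
    have := hmax M hMN₀
    omega
  exact (hp.coprime_iff_not_dvd.mpr hrel).symm.coprime_dvd_left (Subgroup.index_dvd_of_le hMW')

end Profinite

section SupernaturalOrder

variable {G : Type*} [Group G] [TopologicalSpace G]

theorem le_supernaturalOrderExp (N : OpenNormalSubgroup G) (p : ℕ) :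
    ((N.toSubgroup.index.factorization p : ℕ) : ℕ∞) ≤ supernaturalOrderExp G p :=
  le_iSup₂ (f := fun (N : Subgroup G) _ => ((N.index.factorization p : ℕ) : ℕ∞))
    N.toSubgroup ⟨N.isNormal', N.isOpen⟩

theorem exists_factorization_index_eq_supernaturalOrderExp {p : ℕ}
    (h : supernaturalOrderExp G p ≠ ⊤) : ∃ N : OpenNormalSubgroup G,
      ((N.toSubgroup.index.factorization p : ℕ) : ℕ∞) = supernaturalOrderExp G p := by
  unfold supernaturalOrderExp at h ⊢
  rw [iSup_subtype'] at h ⊢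
  have : Nonempty {N : Subgroup G // N ∈ {N : Subgroup G | N.Normal ∧ IsOpen (N : Set G)}} :=
    ⟨⟨⊤, inferInstance, isOpen_univ⟩⟩
  obtain ⟨⟨N, hNn, hNo⟩, hN⟩ := ENat.exists_eq_iSup_of_lt_top h.lt_top
  exact ⟨{ toSubgroup := N, isOpen' := hNo, isNormal' := hNn }, hN⟩

end SupernaturalOrder

theorem index_divides_supernatural_order_general
    (G : Type*) [Group G] [TopologicalSpace G] [IsTopologicalGroup G]
    [CompactSpace G] [TotallyDisconnectedSpace G]
    (H : Subgroup G) (hH : H.index ≠ 0) (p : ℕ) (hp : p.Prime) :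
    ((H.index.factorization p : ℕ) : ℕ∞) ≤ supernaturalOrderExp G p := by
  obtain htop | hfin := eq_or_ne (supernaturalOrderExp G p) ⊤
  · exact htop ▸ le_top
  obtain ⟨N₀, hN₀⟩ := exists_factorization_index_eq_supernaturalOrderExp hfin
  have hmax (M : OpenNormalSubgroup G) :
      M.toSubgroup.index.factorization p ≤ N₀.toSubgroup.index.factorization p := by
    exact_mod_cast hN₀ ▸ le_supernaturalOrderExp M p
  have : CompactSpace N₀.toSubgroup := isCompact_iff_compactSpace.mp N₀.isClosed.isCompact
  have hsurj : Function.Surjective (· ^ p : N₀.toSubgroup → N₀.toSubgroup) :=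
    pow_surjective_of_forall_coprime_index fun W =>
      N₀.toOpenSubgroup.coprime_index_of_forall_factorization_le hp (fun M _ => hmax M)
        W.toOpenSubgroup
  have : H.FiniteIndex := ⟨hH⟩
  have : H.IsFiniteRelIndex N₀.toSubgroup := Subgroup.isFiniteRelIndex_of_finiteIndex
  have hrel : ¬ p ∣ H.relIndex N₀.toSubgroup :=
    (H.subgroupOf N₀.toSubgroup).not_dvd_index_of_pow_surjective hp hsurj
      Subgroup.relIndex_ne_zero
  rw [← hN₀]
  exact_mod_cast
    H.factorization_index_le_of_not_dvd_relIndex hH Subgroup.index_ne_zero_of_finite hrel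

/-- The index of a finite index subgroup of a profinite group divides the
supernatural order of the group: componentwise at every prime. -/
theorem index_divides_supernatural_order
    (G : Type*) [Group G] [TopologicalSpace G] [IsTopologicalGroup G]
    [CompactSpace G] [T2Space G] [TotallyDisconnectedSpace G]
    (H : Subgroup G) (hH : H.index ≠ 0) (p : ℕ) (hp : p.Prime) :
    ((H.index.factorization p : ℕ) : ℕ∞) ≤ supernaturalOrderExp G p :=
  index_divides_supernatural_order_general G H hH p hp
end

section
/- Let G be a topologically finitely generated pro-p group. Then every subgroup of finite index (as an abstract subgroup) is open in G. -/
/-!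
Let `G` be topologically generated by `a₁, …, a_d`. Its open normal subgroups have finite
`p`-group quotients, which are nilpotent, and in a nilpotent group generated by the `aᵢ` every
element of the commutator subgroup is a product `∏ ⁅aᵢ, gᵢ⁆` (induction along the lower central
series, whose last term is central). Approximating in these quotients, the abstract subgroup
`⁅G, G⁆` is the compact image of `Gᵈ` under `g ↦ ∏ ⁅aᵢ, gᵢ⁆`, hence closed; so `Φ = G ^ p ⁅G, G⁆`
is closed, and it is open because `G / Φ` is an elementary abelian `p`-group generated by `d`
elements. Since roots of order prime to `p` exist in `G`, every finite quotient `G / N` is a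
`p`-group. Then `N ⊔ Φ = G` forces `N = G` (Burnside's basis theorem), and otherwise `N` has
smaller index in the open, again finitely generated pro-`p`, subgroup `N ⊔ Φ`.
-/

open Subgroup
open scoped commutatorElement

theorem List.prod_ofFn_eq_single {M : Type*} [Monoid M] {d : ℕ} (x : Fin d → M) (i : Fin d)
    (hx : ∀ j, j ≠ i → x j = 1) : (List.ofFn x).prod = x i := by
  induction d with
  | zero => exact i.elim0
  | succ d ih =>
    rw [List.ofFn_succ, List.prod_cons]
    cases i using Fin.cases with
    | zero => rw [List.prod_eq_one (by simp [hx _ (Fin.succ_ne_zero _)]), mul_one]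
    | succ i =>
      rw [hx 0 (Fin.succ_ne_zero i).symm, one_mul,
        ih (fun j => x j.succ) i fun j hj => hx _ (Fin.succ_injective _ |>.ne hj)]

theorem List.prod_ofFn_mul_of_mem_center {M : Type*} [Monoid M] {d : ℕ} (x c : Fin d → M)
    (hc : ∀ i, c i ∈ Submonoid.center M) :
    (List.ofFn fun i => x i * c i).prod = (List.ofFn x).prod * (List.ofFn c).prod := by
  induction d with
  | zero => simp
  | succ d ih =>
    simp only [List.ofFn_succ, List.prod_cons]
    rw [ih _ _ fun i => hc i.succ, mul_assoc, mul_assoc, ← mul_assoc (c 0),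
      ← Submonoid.mem_center_iff.mp (hc 0), mul_assoc]

section CommutatorProducts

variable {Q : Type*} [Group Q]

theorem commutatorElement_mul_right_of_mem_center {t v w : Q} (h : ⁅t, w⁆ ∈ center Q) :
    ⁅t, v * w⁆ = ⁅t, v⁆ * ⁅t, w⁆ := by
  rw [commutatorElement_mul_right_eq_mul_conj, mul_assoc _ v, mem_center_iff.mp h v,
    ← mul_assoc, mul_inv_cancel_right]

theorem commutatorElement_mul_left_of_mem_center {v w u : Q} (h : ⁅w, u⁆ ∈ center Q) :
    ⁅v * w, u⁆ = ⁅v, u⁆ * ⁅w, u⁆ := by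
  rw [commutatorElement_mul_left_eq_conj_mul, mem_center_iff.mp h v, mul_inv_cancel_right,
    ← mem_center_iff.mp h]

theorem map_mem_commutator {R : Type*} [Group R] (f : Q →* R) {x : Q} (hx : x ∈ commutator Q) :
    f x ∈ commutator R :=
  commutator_mono le_top le_top (map_commutator_eq (G := Q) f ▸ mem_map_of_mem f hx)

def commutatorProd {d : ℕ} (a g : Fin d → Q) : Q :=
  (List.ofFn fun i => ⁅a i, g i⁆).prod

variable {d : ℕ} (a : Fin d → Q)

theorem commutatorProd_one : commutatorProd a 1 = 1 :=
  List.prod_eq_one (by simp)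

theorem commutatorProd_mulSingle (i : Fin d) (u : Q) :
    commutatorProd a (Pi.mulSingle i u) = ⁅a i, u⁆ := by
  rw [commutatorProd, List.prod_ofFn_eq_single _ i fun j hj => by simp [hj], Pi.mulSingle_eq_same]

theorem commutatorProd_mul_of_mem_center {v w : Fin d → Q} (h : ∀ i, ⁅a i, w i⁆ ∈ center Q) :
    commutatorProd a (v * w) = commutatorProd a v * commutatorProd a w := by
  simp only [commutatorProd, Pi.mul_apply, commutatorElement_mul_right_of_mem_center (h _)]
  exact List.prod_ofFn_mul_of_mem_center _ _ fun i => Subgroup.center_toSubmonoid Q ▸ h i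

theorem commutatorProd_mem_commutator (g : Fin d → Q) : commutatorProd a g ∈ commutator Q :=
  list_prod_mem fun _ hx => by
    obtain ⟨i, rfl⟩ := List.mem_ofFn.mp hx
    exact commutator_mem_commutator (mem_top _) (mem_top _)

theorem map_commutatorProd {R : Type*} [Group R] (f : Q →* R) (g : Fin d → Q) :
    f (commutatorProd a g) = commutatorProd (f ∘ a) (f ∘ g) := by
  simp [commutatorProd, map_list_prod, List.map_ofFn, Function.comp_def, map_commutatorElement]

theorem continuous_commutatorProd [TopologicalSpace Q] [IsTopologicalGroup Q] :
    Continuous (commutatorProd a) := by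
  unfold commutatorProd
  simp only [List.ofFn_eq_map]
  refine continuous_list_prod _ fun i _ => ?_
  simp only [commutatorElement_def]
  fun_prop

end CommutatorProducts

section LowerCentralSeries

variable {Q : Type*} [Group Q]

local notation "γ" => Subgroup.lowerCentralSeries (⊤ : Subgroup Q)

theorem commutatorElement_mem_lowerCentralSeries_succ {k : ℕ} {u : Q} (hu : u ∈ γ k) (t : Q) :
    ⁅t, u⁆ ∈ γ (k + 1) := by
  rw [← commutatorElement_inv]
  exact inv_mem (commutator_mem_commutator hu (mem_top t))

theorem mem_center_of_lowerCentralSeries_succ_eq_bot {k : ℕ} (hbot : γ (k + 1) = ⊥) {z : Q}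
    (hz : z ∈ γ k) : z ∈ center Q := by
  refine mem_center_iff.mpr fun g => ?_
  have := commutatorElement_mem_lowerCentralSeries_succ hz g
  rwa [hbot, mem_bot, commutatorElement_eq_one_iff_mul_comm] at this

theorem exists_commutatorProd_eq_of_mem_lowerCentralSeries {m : ℕ} (hbot : γ (m + 2) = ⊥) {d : ℕ}
    {a : Fin d → Q} (ha : closure (Set.range a) = ⊤) {z : Q} (hz : z ∈ γ (m + 1)) :
    ∃ v : Fin d → Q, (∀ i, v i ∈ γ m) ∧ commutatorProd a v = z := by
  -- As `γ (m + 1)` is central, `v ↦ ∏ ⁅aᵢ, vᵢ⁆` is a homomorphism on `(γ m)ᵈ`, and so is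
  -- `t ↦ ⁅t, u⁆` for `u ∈ γ m`; the latter sends the generators `aᵢ` into the range of the former.
  have hcentral {u : Q} (hu : u ∈ γ m) (t : Q) : ⁅t, u⁆ ∈ center Q :=
    mem_center_of_lowerCentralSeries_succ_eq_bot hbot
      (commutatorElement_mem_lowerCentralSeries_succ hu t)
  let Φ : (Fin d → γ m) →* Q := MonoidHom.mk' (fun v => commutatorProd a fun i => (v i : Q))
    fun v w => commutatorProd_mul_of_mem_center a fun i => hcentral (w i).2 (a i)
  suffices γ (m + 1) ≤ Φ.range by
    obtain ⟨v, rfl⟩ := this hz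
    exact ⟨fun i => v i, fun i => (v i).2, rfl⟩
  refine commutator_le.mpr fun u hu t _ => ?_
  let ψ : Q →* Q := MonoidHom.mk' (fun t => ⁅t, u⁆)
    fun _ _ => commutatorElement_mul_left_of_mem_center (hcentral hu _)
  have hgen : closure (Set.range a) ≤ Φ.range.comap ψ := by
    refine (closure_le _).mpr ?_
    rintro _ ⟨i, rfl⟩
    refine ⟨Pi.mulSingle i ⟨u, hu⟩, ?_⟩
    simp only [Φ, ψ, MonoidHom.mk'_apply]
    convert commutatorProd_mulSingle a i u using 2
    ext j
    by_cases hj : j = i <;> simp [hj]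
  rw [← commutatorElement_inv]
  exact inv_mem (hgen (ha ▸ mem_top t))

theorem exists_commutatorProd_eq_of_lowerCentralSeries_eq_bot (n : ℕ) (hbot : γ (n + 1) = ⊥)
    {d : ℕ} {a : Fin d → Q} (ha : closure (Set.range a) = ⊤) {x : Q} (hx : x ∈ commutator Q) :
    ∃ g : Fin d → Q, commutatorProd a g = x := by
  induction n generalizing Q with
  | zero =>
    rw [top_lowerCentralSeries_one] at hbot
    rw [hbot, mem_bot] at hx
    exact ⟨1, hx ▸ commutatorProd_one a⟩
  | succ n ih =>
    let L := (⊤ : Subgroup Q).lowerCentralSeries (n + 1)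
    let π := QuotientGroup.mk' L
    have hπ : Function.Surjective π := QuotientGroup.mk'_surjective L
    have hbot' : (⊤ : Subgroup (Q ⧸ L)).lowerCentralSeries (n + 1) = ⊥ := by
      rw [← map_top_of_surjective π hπ, ← map_lowerCentralSeries, QuotientGroup.map_mk'_self]
    have ha' : closure (Set.range (π ∘ a)) = ⊤ := by
      rw [Set.range_comp, ← MonoidHom.map_closure, ha, map_top_of_surjective π hπ]
    obtain ⟨g', hg'⟩ := ih hbot' ha' (map_mem_commutator π hx)
    choose g hg using fun i => hπ (g' i)
    have hz : (commutatorProd a g)⁻¹ * x ∈ L := by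
      rw [← QuotientGroup.ker_mk' L, MonoidHom.mem_ker, map_mul, map_inv, map_commutatorProd,
        show π ∘ g = g' from funext hg, hg', inv_mul_cancel]
    obtain ⟨v, hv, hv'⟩ := exists_commutatorProd_eq_of_mem_lowerCentralSeries hbot ha hz
    refine ⟨g * v, ?_⟩
    rw [commutatorProd_mul_of_mem_center a fun i => mem_center_of_lowerCentralSeries_succ_eq_bot
      hbot (commutatorElement_mem_lowerCentralSeries_succ (hv i) (a i)), hv', mul_inv_cancel_left]

theorem exists_commutatorProd_eq [Group.IsNilpotent Q] {d : ℕ} {a : Fin d → Q}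
    (ha : closure (Set.range a) = ⊤) {x : Q} (hx : x ∈ commutator Q) :
    ∃ g : Fin d → Q, commutatorProd a g = x := by
  obtain ⟨n, hn⟩ := Subgroup.nilpotent_iff_lowerCentralSeries.mp ‹_›
  exact exists_commutatorProd_eq_of_lowerCentralSeries_eq_bot n
    (le_bot_iff.mp (hn ▸ Subgroup.lowerCentralSeries_antitone _ n.le_succ)) ha hx

end LowerCentralSeries

section PowCommutator

variable (p : ℕ) (G : Type*) [Group G]

def toAbelianizationModPow : G →* Abelianization G ⧸ (powMonoidHom p).range :=
  (QuotientGroup.mk' _).comp Abelianization.of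

/-- The abstract subgroup `G ^ p ⁅G, G⁆`; for a finite `p`-group it is the Frattini subgroup. -/
def powCommutator : Subgroup G :=
  (toAbelianizationModPow p G).ker

variable {p G}

theorem mem_powCommutator {x : G} :
    x ∈ powCommutator p G ↔ ∃ g, ∃ k ∈ commutator G, g ^ p * k = x := by
  simp only [powCommutator, toAbelianizationModPow, MonoidHom.mem_ker, MonoidHom.comp_apply,
    QuotientGroup.mk'_apply, QuotientGroup.eq_one_iff, MonoidHom.mem_range, powMonoidHom_apply]
  constructor
  · rintro ⟨y, hy⟩
    obtain ⟨g, rfl⟩ := QuotientGroup.mk_surjective y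
    refine ⟨g, (g ^ p)⁻¹ * x, ?_, mul_inv_cancel_left _ _⟩
    rw [← Abelianization.ker_of, MonoidHom.mem_ker, map_mul, map_inv, map_pow]
    exact inv_mul_eq_one.mpr hy
  · rintro ⟨g, k, hk, rfl⟩
    rw [← Abelianization.ker_of, MonoidHom.mem_ker] at hk
    exact ⟨Abelianization.of g, by rw [map_mul, hk, mul_one, map_pow]⟩

theorem map_powCommutator_le {H : Type*} [Group H] (f : G →* H) :
    (powCommutator p G).map f ≤ powCommutator p H := by
  rintro _ ⟨x, hx, rfl⟩
  obtain ⟨g, k, hk, rfl⟩ := mem_powCommutator.mp hx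
  exact mem_powCommutator.mpr ⟨f g, f k, map_mem_commutator f hk, by rw [map_mul, map_pow]⟩

theorem IsPGroup.eq_one_of_surjective_pow {Q : Type*} [Group Q] [Finite Q] (hQ : IsPGroup p Q)
    (hsurj : Function.Surjective fun x : Q => x ^ p) (x : Q) : x = 1 := by
  have hinj := Finite.injective_iff_surjective.mpr hsurj
  obtain ⟨k, hk⟩ := hQ x
  induction k generalizing x with
  | zero => rwa [pow_zero, pow_one] at hk
  | succ k ih =>
    rw [pow_succ', pow_mul] at hk
    exact hinj ((ih _ hk).trans (one_pow p).symm)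

theorem IsPGroup.powCommutator_ne_top [Fact p.Prime] {Q : Type*} [Group Q] [Finite Q]
    [Nontrivial Q] (hQ : IsPGroup p Q) : powCommutator p Q ≠ ⊤ := by
  intro htop
  have hab : ∀ y : Abelianization Q, y = 1 := by
    refine (hQ.of_surjective Abelianization.of QuotientGroup.mk_surjective).eq_one_of_surjective_pow
      fun y => ?_
    obtain ⟨x, rfl⟩ := QuotientGroup.mk_surjective y
    have hx : x ∈ powCommutator p Q := htop ▸ mem_top x
    rwa [powCommutator, toAbelianizationModPow, MonoidHom.mem_ker, MonoidHom.comp_apply,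
      QuotientGroup.mk'_apply, QuotientGroup.eq_one_iff] at hx
  have : Group.IsPerfect Q := ⟨eq_top_iff.mpr fun x _ => by
    rw [← Abelianization.ker_of, MonoidHom.mem_ker]
    exact hab _⟩
  exact Group.IsPerfect.not_isNilpotent (G := Q) hQ.isNilpotent

theorem IsPGroup.eq_top_of_sup_powCommutator_eq_top [Fact p.Prime] {N : Subgroup G} [N.Normal]
    [Finite (G ⧸ N)] (hN : IsPGroup p (G ⧸ N)) (h : N ⊔ powCommutator p G = ⊤) : N = ⊤ := by
  refine QuotientGroup.subgroup_eq_top_of_subsingleton N (not_nontrivial_iff_subsingleton.mp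
    fun _ => hN.powCommutator_ne_top (eq_top_iff.mpr ?_))
  calc ⊤ = (N ⊔ powCommutator p G).map (QuotientGroup.mk' N) := by
        rw [h, map_top_of_surjective _ (QuotientGroup.mk'_surjective N)]
    _ = (powCommutator p G).map (QuotientGroup.mk' N) := by
        rw [Subgroup.map_sup, QuotientGroup.map_mk'_self, bot_sup_eq]
    _ ≤ powCommutator p (G ⧸ N) := map_powCommutator_le _

end PowCommutator

/-- Pro-`p`-ness of a profinite group: every open subgroup has `p`-power index. -/
def IsProP (p : ℕ) (G : Type*) [Group G] [TopologicalSpace G] : Prop :=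
  ∀ U : Subgroup G, IsOpen (U : Set G) → ∃ n : ℕ, U.index = p ^ n

def TopologicallyFG (G : Type*) [Group G] [TopologicalSpace G] : Prop :=
  ∃ D : Subgroup G, D.FG ∧ Dense (D : Set G)

section Basic

variable {p : ℕ} {G : Type*} [Group G] [TopologicalSpace G]

theorem IsProP.isPGroup_quotient (hpro : IsProP p G) {U : Subgroup G} [U.Normal]
    (hU : IsOpen (U : Set G)) :
    IsPGroup p (G ⧸ U) :=
  have ⟨n, hn⟩ := hpro U hU
  IsPGroup.of_card (n := n) (by rw [← index_eq_card, hn])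

theorem TopologicallyFG.exists_dense_closure_range (hfg : TopologicallyFG G) :
    ∃ (d : ℕ) (a : Fin d → G), Dense (Subgroup.closure (Set.range a) : Set G) := by
  obtain ⟨_, ⟨S, rfl⟩, hD⟩ := hfg
  obtain ⟨d, a, -, ha⟩ := (S : Set G).toFinite.fin_param
  exact ⟨d, a, ha ▸ hD⟩

theorem IsProP.subgroup (hp : p.Prime) (hpro : IsProP p G) {M : Subgroup G}
    (hM : IsOpen (M : Set G)) : IsProP p M := by
  intro V hV
  obtain ⟨n, hn⟩ := hpro (V.map M.subtype) (by
    rw [coe_map, coe_subtype]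
    exact hM.isOpenMap_subtype_val _ hV)
  rw [index_map_subtype] at hn
  obtain ⟨k, -, hk⟩ := (Nat.dvd_prime_pow hp).mp (Dvd.intro _ hn)
  exact ⟨k, hk⟩

theorem isOpen_of_isOpen_subgroupOf {H M : Subgroup G} (hM : IsOpen (M : Set G)) (hHM : H ≤ M)
    (hH : IsOpen (H.subgroupOf M : Set M)) : IsOpen (H : Set G) := by
  have himage : Subtype.val '' (H.subgroupOf M : Set M) = H := by
    rw [coe_subgroupOf, coe_subtype, Set.image_preimage_eq_inter_range, Subtype.range_coe,
      Set.inter_eq_left.mpr hHM]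
  exact himage ▸ hM.isOpenMap_subtype_val _ hH

end Basic

section TopologicalGroup

variable {G : Type*} [Group G] [TopologicalSpace G] [IsTopologicalGroup G]

theorem map_mk'_eq_top_of_dense {D : Subgroup G} (hD : Dense (D : Set G)) {U : Subgroup G}
    [U.Normal] (hU : IsOpen (U : Set G)) : D.map (QuotientGroup.mk' U) = ⊤ := by
  refine eq_top_iff.mpr fun y _ => ?_
  obtain ⟨g, rfl⟩ := QuotientGroup.mk_surjective y
  obtain ⟨h, hhD, hhU⟩ := hD.exists_mem_open (hU.preimage (continuous_const_mul g⁻¹))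
    ⟨g, by simp [U.one_mem]⟩
  exact ⟨h, hhD, (QuotientGroup.eq.mpr hhU).symm⟩

theorem MonoidHom.finiteIndex_ker_of_isClosed {Q : Type*} [Group Q] (φ : G →* Q)
    (hker : IsClosed (φ.ker : Set G)) {D : Subgroup G} (hD : Dense (D : Set G))
    (hfin : (D.map φ : Set Q).Finite) : φ.ker.FiniteIndex := by
  have hfibre : ∀ q ∈ (D.map φ : Set Q), IsClosed (φ ⁻¹' {q}) := by
    rintro _ ⟨d, -, rfl⟩
    convert hker.preimage (continuous_const_mul d⁻¹) using 1
    ext x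
    simpa [inv_mul_eq_one] using eq_comm
  have hcover : φ ⁻¹' (D.map φ : Set Q) = Set.univ := by
    rw [← Set.biUnion_preimage_singleton]
    exact Set.univ_subset_iff.mp (hD.closure_eq ▸ closure_minimal
      (fun d hd => Set.mem_biUnion (mem_map_of_mem φ hd) rfl) (hfin.isClosed_biUnion hfibre))
  have : Finite φ.range := (hfin.subset <| by
    rintro _ ⟨x, rfl⟩
    exact Set.eq_univ_iff_forall.mp hcover x).to_subtype
  exact ⟨index_ker φ ▸ Nat.card_pos.ne'⟩

variable [CompactSpace G] {p : ℕ}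

theorem IsProP.of_forall_normal (hp : p.Prime)
    (h : ∀ N : Subgroup G, N.Normal → IsOpen (N : Set G) → ∃ n : ℕ, N.index = p ^ n) :
    IsProP p G := by
  intro U hU
  have := quotient_finite_of_isOpen U hU
  have : U.FiniteIndex := finiteIndex_of_finite_quotient
  have hcore := normalCore_isClosed U (isClosed_of_isOpen U hU)
  obtain ⟨n, hn⟩ := h U.normalCore (normalCore_normal U)
    (isOpen_of_isClosed_of_finiteIndex _ hcore)
  obtain ⟨k, -, hk⟩ := (Nat.dvd_prime_pow hp).mp (hn ▸ index_dvd_of_le U.normalCore_le)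
  exact ⟨k, hk⟩

theorem TopologicallyFG.subgroup (hfg : TopologicallyFG G) {M : Subgroup G}
    (hM : IsOpen (M : Set G)) : TopologicallyFG M := by
  obtain ⟨D, hDfg, hD⟩ := hfg
  have := quotient_finite_of_isOpen M hM
  have : M.FiniteIndex := finiteIndex_of_finite_quotient
  have : Group.FG D := (Group.fg_iff_subgroup_fg D).mpr hDfg
  have : Group.FG (M.subgroupOf D) := fg_of_index_ne_zero _
  -- Both are copies of `D ⊓ M`, which has finite index in the finitely generated group `D`.
  let e : M.subgroupOf D ≃* D.subgroupOf M :=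
    ((MulEquiv.subgroupCongr (inf_subgroupOf_left M D).symm).trans
      (subgroupOfEquivOfLe inf_le_left)).trans
    (((subgroupOfEquivOfLe inf_le_right).symm).trans
      (MulEquiv.subgroupCongr (inf_subgroupOf_right D M)))
  refine ⟨D.subgroupOf M, (Group.fg_iff_subgroup_fg _).mp ?_, ?_⟩
  · exact Group.fg_of_surjective (f := e.toMonoidHom) e.surjective
  · rw [coe_subgroupOf]
    exact hD.preimage hM.isOpenMap_subtype_val

variable [TotallyDisconnectedSpace G]

theorem IsClosed.mem_of_forall_quotient {T : Set G} (hT : IsClosed T) {x : G}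
    (h : ∀ U : Subgroup G, U.Normal → IsOpen (U : Set G) → ∃ t ∈ T, (t : G ⧸ U) = x) :
    x ∈ T := by
  rw [← hT.closure_eq, mem_closure_iff]
  intro O hO hxO
  obtain ⟨U, hU⟩ := ProfiniteGrp.exist_openNormalSubgroup_sub_open_nhds_of_one
    (hO.preimage (continuous_const_mul x)) (by simpa using hxO)
  obtain ⟨t, ht, htx⟩ := h U U.isNormal' U.isOpen
  exact ⟨t, by simpa using hU (QuotientGroup.eq.mp htx.symm), ht⟩

theorem IsProP.exists_pow_eq (hpro : IsProP p G) {r : ℕ} (hr : p.Coprime r) (g : G) :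
    ∃ h : G, h ^ r = g := by
  refine (isCompact_range (continuous_pow r)).isClosed.mem_of_forall_quotient fun U _ hU => ?_
  obtain ⟨y, hy⟩ := ((hpro.isPGroup_quotient hU).powEquiv hr).surjective g
  obtain ⟨h, rfl⟩ := QuotientGroup.mk_surjective y
  exact ⟨h ^ r, ⟨h, rfl⟩, hy⟩

theorem IsProP.isPGroup_quotient_of_finite (hp : p.Prime) (hpro : IsProP p G) (N : Subgroup G)
    [N.Normal] [Finite (G ⧸ N)] : IsPGroup p (G ⧸ N) := by
  have hcard : Nat.card (G ⧸ N) ≠ 0 := Nat.card_pos.ne'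
  refine IsPGroup.of_card (Nat.eq_prime_pow_of_unique_prime_dvd hcard fun {q} hq hqdvd => ?_)
  by_contra hqp
  have hsurj : Function.Surjective fun y : G ⧸ N => y ^ q := by
    intro y
    obtain ⟨g, rfl⟩ := QuotientGroup.mk_surjective y
    obtain ⟨h, rfl⟩ := hpro.exists_pow_eq ((Nat.coprime_primes hp hq).mpr (Ne.symm hqp)) g
    exact ⟨h, rfl⟩
  have := Fact.mk hq
  obtain ⟨y, hy⟩ := exists_prime_orderOf_dvd_card' q hqdvd
  have hy1 : y = 1 := Finite.injective_iff_surjective.mpr hsurj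
    (by simp only [← hy, pow_orderOf_eq_one, one_pow])
  rw [hy1, orderOf_one] at hy
  exact hq.one_lt.ne hy

end TopologicalGroup

section ProP

variable {G : Type*} [Group G] [TopologicalSpace G] [IsTopologicalGroup G] [CompactSpace G]
  [TotallyDisconnectedSpace G] {p : ℕ}

theorem IsProP.isClosed_commutator (hp : p.Prime) (hpro : IsProP p G) (hfg : TopologicallyFG G) :
    IsClosed (commutator G : Set G) := by
  have := Fact.mk hp
  obtain ⟨d, a, ha⟩ := hfg.exists_dense_closure_range
  suffices (commutator G : Set G) = Set.range (commutatorProd a) from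
    this ▸ (isCompact_range (continuous_commutatorProd a)).isClosed
  refine subset_antisymm (fun x hx => ?_)
    (Set.range_subset_iff.mpr (commutatorProd_mem_commutator a))
  refine (isCompact_range (continuous_commutatorProd a)).isClosed.mem_of_forall_quotient
    fun U _ hU => ?_
  have := quotient_finite_of_isOpen U hU
  have := (hpro.isPGroup_quotient hU).isNilpotent
  let π := QuotientGroup.mk' U
  have hπa : Subgroup.closure (Set.range (π ∘ a)) = ⊤ := by
    rw [Set.range_comp, ← MonoidHom.map_closure, map_mk'_eq_top_of_dense ha hU]
  obtain ⟨g', hg'⟩ := exists_commutatorProd_eq hπa (map_mem_commutator π hx)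
  choose g hg using fun i => QuotientGroup.mk'_surjective U (g' i)
  refine ⟨commutatorProd a g, ⟨g, rfl⟩, ?_⟩
  rw [← QuotientGroup.mk'_apply, map_commutatorProd, show π ∘ g = g' from funext hg, hg']
  rfl

theorem IsProP.isClosed_powCommutator (hp : p.Prime) (hpro : IsProP p G)
    (hfg : TopologicallyFG G) : IsClosed (powCommutator p G : Set G) := by
  have := isCompact_iff_compactSpace.mp (hpro.isClosed_commutator hp hfg).isCompact
  suffices (powCommutator p G : Set G) =
      Set.range fun gk : G × commutator G => gk.1 ^ p * (gk.2 : G) from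
    this ▸ (isCompact_range (by fun_prop)).isClosed
  ext x
  simp [mem_powCommutator]

theorem IsProP.isOpen_powCommutator (hp : p.Prime) (hpro : IsProP p G)
    (hfg : TopologicallyFG G) : IsOpen (powCommutator p G : Set G) := by
  obtain ⟨d, a, ha⟩ := hfg.exists_dense_closure_range
  let φ := toAbelianizationModPow p G
  have hexp (y : Abelianization G ⧸ (powMonoidHom p).range) : y ^ p = 1 := by
    obtain ⟨z, rfl⟩ := QuotientGroup.mk_surjective y
    exact (QuotientGroup.eq_one_iff _).mpr ⟨z, rfl⟩
  have hfin : Finite ((Subgroup.closure (Set.range a)).map φ) := by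
    rw [MonoidHom.map_closure, ← Set.range_comp]
    exact CommGroup.finite_of_fg_isMulTorsion _ fun y =>
      isOfFinOrder_iff_pow_eq_one.mpr ⟨p, hp.pos, Subtype.ext (hexp y)⟩
  have hclosed := hpro.isClosed_powCommutator hp hfg
  have : (powCommutator p G).FiniteIndex :=
    φ.finiteIndex_ker_of_isClosed hclosed ha (Set.toFinite _)
  exact isOpen_of_isClosed_of_finiteIndex _ hclosed

theorem IsProP.isOpen_of_normal (hp : p.Prime) (hpro : IsProP p G)
    (hfg : TopologicallyFG G) (N : Subgroup G) [N.Normal] (hN : N.index ≠ 0) :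
    IsOpen (N : Set G) := by
  induction hn : N.index using Nat.strong_induction_on generalizing G with
  | _ n ih =>
  have := Fact.mk hp
  let M := N ⊔ powCommutator p G
  by_cases hMtop : M = ⊤
  · have : N.FiniteIndex := ⟨hN⟩
    rw [(hpro.isPGroup_quotient_of_finite hp N).eq_top_of_sup_powCommutator_eq_top hMtop, coe_top]
    exact isOpen_univ
  have hMo : IsOpen (M : Set G) := isOpen_mono le_sup_right (hpro.isOpen_powCommutator hp hfg)
  have := isCompact_iff_compactSpace.mp (isClosed_of_isOpen M hMo).isCompact
  have := quotient_finite_of_isOpen M hMo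
  have hrel : N.relIndex M * M.index = n := hn ▸ relIndex_mul_index le_sup_left
  have hrel0 : N.relIndex M ≠ 0 := left_ne_zero_of_mul (hrel ▸ hn ▸ hN)
  have hlt : N.relIndex M < n :=
    hrel ▸ lt_mul_of_one_lt_right (Nat.pos_of_ne_zero hrel0) (one_lt_index_of_ne_top hMtop)
  exact isOpen_of_isOpen_subgroupOf hMo le_sup_left
    (ih _ hlt (hpro.subgroup hp hMo) (hfg.subgroup hMo) _ hrel0 rfl)

end ProP

theorem serre_finiteIndex_isOpen_general
    (p : ℕ) (hp : p.Prime)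
    (G : Type*) [Group G] [TopologicalSpace G] [IsTopologicalGroup G]
    [CompactSpace G] [TotallyDisconnectedSpace G]
    (hpro : ∀ N : Subgroup G, N.Normal → IsOpen (N : Set G) → ∃ n : ℕ, N.index = p ^ n)
    (hfg : ∃ T : Finset G, (Subgroup.closure (T : Set G)).topologicalClosure = ⊤)
    (H : Subgroup G) (hH : H.index ≠ 0) :
    IsOpen (H : Set G) := by
  obtain ⟨T, hT⟩ := hfg
  have hfg' : TopologicallyFG G := ⟨_, ⟨T, rfl⟩, by
    rw [dense_iff_closure_eq, ← topologicalClosure_coe, hT, coe_top]⟩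
  have : H.FiniteIndex := ⟨hH⟩
  exact isOpen_mono H.normalCore_le <| (IsProP.of_forall_normal hp hpro).isOpen_of_normal hp hfg'
    H.normalCore FiniteIndex.index_ne_zero

/-- Serre's theorem: in a topologically finitely generated pro-p group, every
finite index subgroup is open. -/
theorem serre_finiteIndex_isOpen
    (p : ℕ) (hp : p.Prime)
    (G : Type*) [Group G] [TopologicalSpace G] [IsTopologicalGroup G]
    [CompactSpace G] [T2Space G] [TotallyDisconnectedSpace G]
    (hpro : ∀ N : Subgroup G, N.Normal → IsOpen (N : Set G) → ∃ n : ℕ, N.index = p ^ n)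
    (hfg : ∃ T : Finset G, (Subgroup.closure (T : Set G)).topologicalClosure = ⊤)
    (H : Subgroup G) (hH : H.index ≠ 0) :
    IsOpen (H : Set G) :=
  serre_finiteIndex_isOpen_general p hp G hpro hfg H hH
end

section
/- Let G be a finite p-group with p odd and G powerful (i.e., G/G^p is abelian), generated by a₁,…,a_d. Then the subgroup G^p generated by all p-th powers equals the subgroup generated by a₁^p,…,a_d^p. -/
/-!
Put `K = G^p` and `N = Φ(K)`; modulo `N`, `K` has exponent `p`. In a powerful `p`-group whose
`G^p` has exponent `p`, `G^p` is central: if `⁅⁅G^p, G⁆, G⁆ = 1`, the identity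
`x^n g x^{-n} = ⁅x,⁅x,g⁆⁆^(n choose 2) ⁅x,g⁆^n g` together with `p ∣ p choose 2` (`p` odd) makes
`x^p` central; in general, applying this modulo `⁅L, G⁆` for `L = ⁅G^p, G⁆` gives `L ≤ ⁅L, G⁆`,
so `L = 1` by nilpotency. Hence `x ↦ x^p` is a homomorphism modulo `N`, and `K/N` is generated
by the images of the `a i ^ p`. As `N` is the Frattini subgroup of `K`, the `a i ^ p` generate `K`.
-/

open Subgroup
open scoped commutatorElement

def powSubgroup (n : ℕ) (G : Type*) [Group G] : Subgroup G :=
  closure {x : G | ∃ g : G, g ^ n = x}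

def IsPowerful (p : ℕ) (G : Type*) [Group G] : Prop :=
  ⁅(⊤ : Subgroup G), ⊤⁆ ≤ powSubgroup p G

section PowSubgroup

variable {G H : Type*} [Group G] [Group H] (n : ℕ)

lemma pow_mem_powSubgroup (g : G) : g ^ n ∈ powSubgroup n G :=
  subset_closure ⟨g, rfl⟩

variable {n} in
lemma map_powSubgroup {f : G →* H} (hf : Function.Surjective f) :
    (powSubgroup n G).map f = powSubgroup n H := by
  rw [powSubgroup, powSubgroup, MonoidHom.map_closure]
  congr 1
  ext y
  constructor
  · rintro ⟨_, ⟨g, rfl⟩, rfl⟩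
    exact ⟨f g, (map_pow f g n).symm⟩
  · rintro ⟨h, rfl⟩
    obtain ⟨g, rfl⟩ := hf h
    exact ⟨g ^ n, ⟨g, rfl⟩, map_pow f g n⟩

instance : (powSubgroup n G).Characteristic :=
  characteristic_iff_map_eq.mpr fun φ => map_powSubgroup φ.surjective

variable {n} in
lemma powSubgroup_eq_closure_range_pow {ι : Type*} {a : ι → G}
    (ha : closure (Set.range a) = ⊤) (hmul : ∀ x y : G, (x * y) ^ n = x ^ n * y ^ n) :
    powSubgroup n G = closure (Set.range fun i => a i ^ n) := by
  let φ : G →* G := MonoidHom.mk' (· ^ n) hmul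
  calc powSubgroup n G = φ.range := closure_eq φ.range
    _ = closure (Set.range fun i => a i ^ n) := by
      rw [MonoidHom.range_eq_map, ← ha, MonoidHom.map_closure, ← Set.range_comp]
      rfl

lemma IsPowerful.map {p : ℕ} (hG : IsPowerful p G) {f : G →* H} (hf : Function.Surjective f) :
    IsPowerful p H := by
  rw [IsPowerful, ← map_top_of_surjective f hf, ← map_commutator, ← map_powSubgroup hf]
  exact map_mono hG

end PowSubgroup

lemma Odd.dvd_choose_two {p : ℕ} (hp : Odd p) : p ∣ p.choose 2 := by
  obtain ⟨k, rfl⟩ := hp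
  refine ⟨k, ?_⟩
  rw [Nat.choose_two_right, Nat.add_sub_cancel, mul_left_comm, Nat.mul_div_cancel_left _ two_pos]

section CommutatorPow

variable {G : Type*} [Group G]

lemma conj_pow_eq_commutator_pow {x g : G} (hx : Commute ⁅x, ⁅x, g⁆⁆ x)
    (hc : Commute ⁅x, ⁅x, g⁆⁆ ⁅x, g⁆) (n : ℕ) :
    x ^ n * g * (x ^ n)⁻¹ = ⁅x, ⁅x, g⁆⁆ ^ n.choose 2 * ⁅x, g⁆ ^ n * g := by
  induction n with
  | zero => simp
  | succ n ih =>
    have hxD : x * ⁅x, ⁅x, g⁆⁆ * x⁻¹ = ⁅x, ⁅x, g⁆⁆ := by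
      rw [← hx.eq, mul_inv_cancel_right]
    have hxc : x * ⁅x, g⁆ * x⁻¹ = ⁅x, ⁅x, g⁆⁆ * ⁅x, g⁆ := by
      simp only [commutatorElement_def]; group
    have hxg : x * g * x⁻¹ = ⁅x, g⁆ * g := by
      simp only [commutatorElement_def]; group
    calc x ^ (n + 1) * g * (x ^ (n + 1))⁻¹ = x * (x ^ n * g * (x ^ n)⁻¹) * x⁻¹ := by group
      _ = (x * ⁅x, ⁅x, g⁆⁆ * x⁻¹) ^ n.choose 2 * (x * ⁅x, g⁆ * x⁻¹) ^ n *
            (x * g * x⁻¹) := by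
        rw [ih]; simp only [conj_pow]; group
      _ = ⁅x, ⁅x, g⁆⁆ ^ (n + n.choose 2) * ⁅x, g⁆ ^ (n + 1) * g := by
        rw [hxD, hxc, hxg, hc.mul_pow, add_comm n, pow_add, pow_succ]
        simp only [mul_assoc]
      _ = _ := by rw [Nat.choose_succ_succ, Nat.choose_one_right]

lemma mul_pow_eq_commutator_pow {x y : G} (hx : Commute ⁅y, x⁆ x) (hy : Commute ⁅y, x⁆ y)
    (n : ℕ) : (x * y) ^ n = ⁅y, x⁆ ^ n.choose 2 * x ^ n * y ^ n := by
  have hyC : ⁅y, ⁅y, x⁆⁆ = 1 := commutatorElement_eq_one_iff_mul_comm.mpr hy.symm.eq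
  have hyx (m : ℕ) : y ^ m * x = ⁅y, x⁆ ^ m * x * y ^ m := by
    have h := conj_pow_eq_commutator_pow (x := y) (g := x) (by rw [hyC]; exact Commute.one_left _)
      (by rw [hyC]; exact Commute.one_left _) m
    rw [hyC, one_pow, one_mul] at h
    rw [← h, inv_mul_cancel_right]
  induction n with
  | zero => simp
  | succ n ih =>
    calc (x * y) ^ (n + 1) = ⁅y, x⁆ ^ n.choose 2 * x ^ n * (y ^ n * x) * y := by
          rw [pow_succ, ih]; group
      _ = ⁅y, x⁆ ^ n.choose 2 * (x ^ n * ⁅y, x⁆ ^ n) * x * (y ^ n * y) := by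
          rw [hyx]; simp only [mul_assoc]
      _ = ⁅y, x⁆ ^ (n + n.choose 2) * x ^ (n + 1) * y ^ (n + 1) := by
          rw [← (hx.pow_pow n n).eq, add_comm n, pow_add, pow_succ, pow_succ]
          simp only [mul_assoc]
      _ = _ := by rw [Nat.choose_succ_succ, Nat.choose_one_right]

end CommutatorPow

section Powerful

variable {p : ℕ} {G : Type*} [Group G]

lemma pow_commute_of_commutator_pow_eq_one (hp : Odd p) {x g : G}
    (hx : Commute ⁅x, ⁅x, g⁆⁆ x) (hc : Commute ⁅x, ⁅x, g⁆⁆ ⁅x, g⁆)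
    (hcp : ⁅x, g⁆ ^ p = 1) (hDp : ⁅x, ⁅x, g⁆⁆ ^ p = 1) : Commute (x ^ p) g := by
  obtain ⟨k, hk⟩ := hp.dvd_choose_two
  have h := conj_pow_eq_commutator_pow hx hc p
  rw [hk, pow_mul, hDp, one_pow, hcp, one_mul, one_mul, mul_inv_eq_iff_eq_mul] at h
  exact h

lemma mul_pow_of_commutator_pow_eq_one (hp : Odd p) {x y : G} (hx : Commute ⁅y, x⁆ x)
    (hy : Commute ⁅y, x⁆ y) (hCp : ⁅y, x⁆ ^ p = 1) : (x * y) ^ p = x ^ p * y ^ p := by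
  obtain ⟨k, hk⟩ := hp.dvd_choose_two
  rw [mul_pow_eq_commutator_pow hx hy, hk, pow_mul, hCp, one_pow, one_mul]

lemma powSubgroup_le_center_of_commutator_commutator_eq_bot (hp : Odd p) (hG : IsPowerful p G)
    (hexp : ∀ k ∈ powSubgroup p G, k ^ p = 1)
    (h : ⁅⁅powSubgroup p G, (⊤ : Subgroup G)⁆, (⊤ : Subgroup G)⁆ = ⊥) :
    powSubgroup p G ≤ center G := by
  rw [powSubgroup, closure_le]
  rintro _ ⟨x, rfl⟩
  refine mem_center_iff.mpr fun g => ?_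
  have hc : ⁅x, g⁆ ∈ powSubgroup p G := hG (commutator_mem_commutator (mem_top _) (mem_top _))
  have hD : ⁅x, ⁅x, g⁆⁆ ∈ ⁅powSubgroup p G, (⊤ : Subgroup G)⁆ :=
    commutator_comm (powSubgroup p G) ⊤ ▸ commutator_mem_commutator (mem_top x) hc
  have hDcenter := commutator_top_right_eq_bot_iff_le_center.mp h hD
  exact (pow_commute_of_commutator_pow_eq_one hp (mem_center_iff.mp hDcenter x).symm
    (mem_center_iff.mp hDcenter _).symm (hexp _ hc) (hexp _ (commutator_le_left _ _ hD))).symm.eq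

lemma Subgroup.eq_bot_of_le_commutator_top [Group.IsNilpotent G] {L : Subgroup G}
    (h : L ≤ ⁅L, ⊤⁆) : L = ⊥ := by
  obtain ⟨n, hn⟩ := nilpotent_iff_lowerCentralSeries.mp ‹Group.IsNilpotent G›
  have hL (m : ℕ) : L ≤ (⊤ : Subgroup G).lowerCentralSeries m := by
    induction m with
    | zero => exact le_top
    | succ m ih => exact h.trans (commutator_mono ih le_rfl)
  exact le_bot_iff.mp (hn ▸ hL n)

lemma IsPowerful.powSubgroup_le_center [Group.IsNilpotent G] (hp : Odd p) (hG : IsPowerful p G)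
    (hexp : ∀ k ∈ powSubgroup p G, k ^ p = 1) : powSubgroup p G ≤ center G := by
  set L := ⁅powSubgroup p G, (⊤ : Subgroup G)⁆
  let f := QuotientGroup.mk' ⁅L, (⊤ : Subgroup G)⁆
  have hf : Function.Surjective f := QuotientGroup.mk'_surjective _
  have hQ : powSubgroup p (G ⧸ ⁅L, (⊤ : Subgroup G)⁆) ≤ center _ := by
    refine powSubgroup_le_center_of_commutator_commutator_eq_bot hp (hG.map hf) ?_ ?_
    · rw [← map_powSubgroup hf]
      rintro _ ⟨k, hk, rfl⟩
      rw [← map_pow, hexp k hk, map_one]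
    · rw [← map_powSubgroup hf, ← map_top_of_surjective f hf, ← map_commutator,
        ← map_commutator, Subgroup.map_eq_bot_iff, QuotientGroup.ker_mk']
  rw [← commutator_top_right_eq_bot_iff_le_center] at hQ ⊢
  rw [← map_powSubgroup hf, ← map_top_of_surjective f hf, ← map_commutator,
    Subgroup.map_eq_bot_iff, QuotientGroup.ker_mk'] at hQ
  exact eq_bot_of_le_commutator_top hQ

lemma IsPowerful.mul_pow [Group.IsNilpotent G] (hp : Odd p) (hG : IsPowerful p G)
    (hexp : ∀ k ∈ powSubgroup p G, k ^ p = 1) (x y : G) : (x * y) ^ p = x ^ p * y ^ p := by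
  have hC : ⁅y, x⁆ ∈ powSubgroup p G := hG (commutator_mem_commutator (mem_top _) (mem_top _))
  have hCcenter := hG.powSubgroup_le_center hp hexp hC
  exact mul_pow_of_commutator_pow_eq_one hp (mem_center_iff.mp hCcenter x).symm
    (mem_center_iff.mp hCcenter y).symm (hexp _ hC)

end Powerful

section Frattini

variable {p : ℕ} [Fact p.Prime] {G : Type*} [Group G] [Finite G]

/-- `M` is normal by nilpotency, and `G ⧸ M` is generated by any element of order `p`
(Cauchy), since the preimage of the subgroup it generates lies strictly above `M`. -/
lemma IsPGroup.pow_mem_of_isCoatom (hG : IsPGroup p G) {M : Subgroup G} (hM : IsCoatom M)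
    (g : G) : g ^ p ∈ M := by
  have : M.Normal := (Group.isNilpotent_of_finite_tfae.out 0 2 rfl rfl).mp hG.isNilpotent M hM
  have hdvd : p ∣ Nat.card (G ⧸ M) := (hG.to_quotient M).card_eq_or_dvd.resolve_left
    fun h => hM.1 (index_eq_one.mp h)
  obtain ⟨z, hz⟩ := exists_prime_orderOf_dvd_card' p hdvd
  have hzM : (zpowers z).comap (QuotientGroup.mk' M) = ⊤ := by
    refine (hM.le_iff.mp fun m hm => ?_).resolve_right fun h => ?_
    · simp [(QuotientGroup.eq_one_iff m).mpr hm]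
    · obtain ⟨y, rfl⟩ := QuotientGroup.mk'_surjective M z
      have hy : y ∈ M := h ▸ mem_comap.mpr (mem_zpowers _)
      rw [QuotientGroup.mk'_apply, (QuotientGroup.eq_one_iff y).mpr hy, orderOf_one] at hz
      exact (Fact.out : p.Prime).one_lt.ne hz
  obtain ⟨k, hk⟩ := mem_zpowers_iff.mp (hzM ▸ mem_top g : g ∈ (zpowers z).comap _)
  rw [← QuotientGroup.eq_one_iff, QuotientGroup.mk_pow, ← QuotientGroup.mk'_apply, ← hk,
    ← zpow_natCast, ← zpow_mul, mul_comm, zpow_mul, zpow_natCast, ← hz, pow_orderOf_eq_one,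
    one_zpow]

lemma IsPGroup.powSubgroup_le_frattini (hG : IsPGroup p G) : powSubgroup p G ≤ frattini G := by
  refine le_iInf₂ fun M hM => (closure_le M).mpr ?_
  rintro _ ⟨g, rfl⟩
  exact hG.pow_mem_of_isCoatom hM g

end Frattini

lemma Subgroup.eq_of_sup_map_frattini_eq {G : Type*} [Group G] [Finite G] {K M : Subgroup G}
    (hMK : M ≤ K) (h : M ⊔ (frattini K).map K.subtype = K) : M = K := by
  have hK : M.subgroupOf K ⊔ frattini K = ⊤ := by
    apply map_injective K.subtype_injective
    rw [map_sup, subgroupOf_map_subtype, inf_eq_left.mpr hMK, h, ← MonoidHom.range_eq_map,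
      range_subtype]
  exact le_antisymm hMK (subgroupOf_eq_top.mp (frattini_nongenerating hK))

/-- For an odd prime `p` and a powerful finite `p`-group `G` generated by
`a 0, …, a (d-1)`, the subgroup generated by `p`-th powers equals the subgroup
generated by `(a i)^p`. -/
theorem powerful_pPow_eq_closure_gen_pows
    (p : ℕ) (hp : p.Prime) (hodd : Odd p)
    (G : Type*) [Group G] [Finite G] (hpG : IsPGroup p G)
    (hpow : ⁅(⊤ : Subgroup G), (⊤ : Subgroup G)⁆ ≤ Subgroup.closure {x : G | ∃ g : G, g ^ p = x})
    (d : ℕ) (a : Fin d → G) (ha : Subgroup.closure (Set.range a) = ⊤) :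
    Subgroup.closure {x : G | ∃ g : G, g ^ p = x} =
      Subgroup.closure (Set.range fun i => a i ^ p) := by
  have : Fact p.Prime := ⟨hp⟩
  change powSubgroup p G = _
  set K := powSubgroup p G
  set M := closure (Set.range fun i => a i ^ p)
  let N := (frattini K).map K.subtype
  let f := QuotientGroup.mk' N
  have hf : Function.Surjective f := QuotientGroup.mk'_surjective N
  have hexp : ∀ k ∈ powSubgroup p (G ⧸ N), k ^ p = 1 := by
    rw [← map_powSubgroup hf]
    rintro _ ⟨k, hk, rfl⟩
    rw [← map_pow, QuotientGroup.mk'_apply, QuotientGroup.eq_one_iff]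
    exact ⟨_, (hpG.to_subgroup K).powSubgroup_le_frattini (pow_mem_powSubgroup p ⟨k, hk⟩), rfl⟩
  have : Group.IsNilpotent (G ⧸ N) := (hpG.to_quotient N).isNilpotent
  have hmul := (IsPowerful.map (p := p) hpow hf).mul_pow hodd hexp
  have haQ : closure (Set.range (f ∘ a)) = ⊤ := by
    rw [Set.range_comp, ← MonoidHom.map_closure, ha, map_top_of_surjective f hf]
  have hQ : K.map f = M.map f := by
    rw [map_powSubgroup hf, powSubgroup_eq_closure_range_pow haQ hmul, MonoidHom.map_closure,
      ← Set.range_comp]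
    simp only [Function.comp_def, map_pow]
  have hMN : M ⊔ N = K := by
    rw [← QuotientGroup.ker_mk' N, ← comap_map_eq, ← hQ, comap_map_eq, QuotientGroup.ker_mk',
      sup_eq_left.mpr (map_subtype_le _)]
  have hMK : M ≤ K := (closure_le K).mpr fun _ ⟨i, hi⟩ => hi ▸ pow_mem_powSubgroup p (a i)
  exact (eq_of_sup_map_frattini_eq hMK hMN).symm
end

section
/- Baldwin–Saxl: Let G be a group and (H_i : i ∈ I_f) a finite family of subgroups of G belonging to a family S of subsets of G. Suppose the dual family {x ∈ G ↦ which sets of S contain x} has VC-dimension at most k, i.e., the family of sets S_x = {S ∈ S : x ∈ S} indexed by x ∈ G shatters no (k+1)-element subset of S. Then there exist i₁,…,i_k ∈ I_f such that ⋂_{i ∈ I_f} H_i = H_{i₁} ∩ ⋯ ∩ H_{i_k}. -/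
/-!
Choose an inclusion-minimal set `s` of indices with `⨅ i ∈ s, H i = ⨅ i, H i`. Minimality gives,
for each `i ∈ s`, an element `x i` lying in every `H j` with `j ∈ s \ {i}` but not in `H i`.
Then any `A ⊆ s` is shattered: `B ⊆ A` is cut out by the product of the `x i` with `i ∈ A \ B`,
since exactly one of its factors, hence the product itself, misses `H i` when `i ∈ A \ B`,
while all factors lie in `H i` when `i ∈ B`. So `s` has at most `k` elements.
-/

namespace Subgroup

variable {G ι : Type*} [Group G] (H : ι → Subgroup G)

def IsIndependentOn (A : Finset ι) : Prop :=
  ∀ i ∈ A, ∃ x : G, x ∉ H i ∧ ∀ j ∈ A, j ≠ i → x ∈ H j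

variable {H}

theorem IsIndependentOn.mono {A s : Finset ι} (hs : IsIndependentOn H s) (hA : A ⊆ s) :
    IsIndependentOn H A := fun i hi ↦
  (hs i (hA hi)).imp fun _ ⟨hxi, hx⟩ ↦ ⟨hxi, fun j hj ↦ hx j (hA hj)⟩

theorem IsIndependentOn.exists_mem_iff_notMem {A : Finset ι} (hA : IsIndependentOn H A)
    {T : Finset ι} (hT : T ⊆ A) : ∃ x : G, ∀ i ∈ A, (x ∈ H i ↔ i ∉ T) := by
  classical
  induction T using Finset.induction_on with
  | empty => exact ⟨1, fun i _ ↦ by simp [one_mem]⟩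
  | insert a T haT ih =>
    obtain ⟨x, hx⟩ := ih ((Finset.subset_insert a T).trans hT)
    obtain ⟨y, hya, hy⟩ := hA a (hT (Finset.mem_insert_self a T))
    refine ⟨y * x, fun i hi ↦ ?_⟩
    rcases eq_or_ne i a with rfl | hia
    · have hxi : x ∈ H i := (hx i hi).2 haT
      simpa [(H i).mul_mem_cancel_right hxi] using hya
    · rw [(H i).mul_mem_cancel_left (hy i hi hia), hx i hi]
      simp [hia]

theorem IsIndependentOn.shatters {A : Finset ι} (hA : IsIndependentOn H A) :
    ∀ B ∈ A.powerset, ∃ x : G, ∀ i ∈ A, (x ∈ H i ↔ i ∈ B) := by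
  classical
  intro B _
  obtain ⟨x, hx⟩ := hA.exists_mem_iff_notMem (Finset.sdiff_subset (s := A) (t := B))
  exact ⟨x, fun i hi ↦ by simpa [hi] using hx i hi⟩

theorem isIndependentOn_of_minimal {s : Finset ι}
    (hs : Minimal (fun t : Finset ι ↦ ⨅ i ∈ t, H i = ⨅ i, H i) s) : IsIndependentOn H s := by
  classical
  intro i hi
  by_contra hsep
  refine hs.not_prop_of_lt (Finset.erase_ssubset hi) ?_
  rw [← hs.prop, ← Finset.insert_erase hi, Finset.iInf_insert, Finset.erase_insert_eq_erase,
    Finset.erase_idem]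
  refine (inf_eq_right.2 fun x hx ↦ not_not.1 fun hxi ↦ hsep ⟨x, hxi, ?_⟩).symm
  simp only [mem_iInf, Finset.mem_erase] at hx
  exact fun j hj hji ↦ hx j ⟨hji, hj⟩

end Subgroup

/-- Baldwin–Saxl: if the dual set system of a finite family of subgroups
`(H i : i ∈ ι)` of a group `G` has VC-dimension at most `k` (i.e. no
`(k+1)`-element set of indices is shattered by the sets `{i | x ∈ H i}`,
`x ∈ G`), then the intersection of the whole family equals the intersection of
some `k` of them. -/
theorem baldwin_saxl
    (G : Type*) [Group G] (ι : Type*) [Fintype ι] (H : ι → Subgroup G) (k : ℕ)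
    (hVC : ∀ A : Finset ι, A.card = k + 1 →
      ¬ (∀ B ∈ A.powerset, ∃ x : G, ∀ i ∈ A, (x ∈ H i ↔ i ∈ B))) :
    ∃ s : Finset ι, s.card ≤ k ∧ (⨅ i, H i) = ⨅ i ∈ s, H i := by
  obtain ⟨s, hs⟩ := exists_minimal_of_wellFoundedLT
    (fun t : Finset ι ↦ ⨅ i ∈ t, H i = ⨅ i, H i) ⟨Finset.univ, by simp⟩
  refine ⟨s, not_lt.1 fun hcard ↦ ?_, hs.prop.symm⟩
  obtain ⟨A, hAs, hAcard⟩ := Finset.exists_subset_card_eq hcard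
  exact hVC A hAcard ((Subgroup.isIndependentOn_of_minimal hs).mono hAs).shatters
end

section
/- Sauer–Shelah: Let X be a set and S a family of subsets of X with VC-dimension at most k. Then for every n ≥ k and every finite A ⊆ X with |A| ≤ n, the number of distinct traces |{S ∩ A : S ∈ S}| is at most ∑_{i=0}^{k} C(n,i). -/
/-- Sauer–Shelah: if a family `S` of subsets of `X` has VC-dimension at most `k`
(no set of size `k+1` is shattered), then for every `n ≥ k` and every finite
`A ⊆ X` with `|A| ≤ n`, the number of traces `{s ∩ A : s ∈ S}` is at most
`∑_{i=0}^{k} C(n,i)`. -/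
theorem sauer_shelah
    (X : Type*) (S : Set (Set X)) (k : ℕ)
    (hVC : ∀ A : Finset X,
      (∀ B ∈ A.powerset, ∃ s ∈ S, ∀ x ∈ A, (x ∈ s ↔ x ∈ B)) → A.card ≤ k)
    (n : ℕ) (hn : k ≤ n) (A : Finset X) (hA : A.card ≤ n) :
    {T : Set X | ∃ s ∈ S, T = s ∩ (A : Set X)}.ncard ≤
      ∑ i ∈ Finset.range (k + 1), n.choose i := by
  classical
  set α := {x // x ∈ A}
  -- trace of a set of X as a finset of the subtype
  set tr : Set X → Finset α := fun s => A.attach.filter (fun x => x.1 ∈ s) with htr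
  set 𝒜 : Finset (Finset α) :=
    Finset.univ.filter (fun B => ∃ s ∈ S, B = tr s) with h𝒜
  have key1 : {T : Set X | ∃ s ∈ S, T = s ∩ (A : Set X)}.ncard ≤ 𝒜.card := by
    rw [← Set.ncard_coe_finset]
    refine Set.ncard_le_ncard_of_injOn tr ?_ ?_ (Finset.finite_toSet _)
    · rintro T ⟨s, hs, rfl⟩
      simp only [Finset.mem_coe, h𝒜, Finset.mem_filter, Finset.mem_univ, true_and]
      refine ⟨s, hs, ?_⟩
      ext x
      simp [htr]
    · rintro T ⟨s, hs, rfl⟩ T' ⟨s', hs', rfl⟩ h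
      ext x
      constructor
      · rintro ⟨hxs, hxA⟩
        have : (⟨x, hxA⟩ : α) ∈ tr (s ∩ ↑A) := by simp [htr, hxs, hxA]
        rw [h] at this
        simp only [htr, Finset.mem_filter] at this
        exact this.2
      · rintro ⟨hxs, hxA⟩
        have : (⟨x, hxA⟩ : α) ∈ tr (s' ∩ ↑A) := by simp [htr, hxs, hxA]
        rw [← h] at this
        simp only [htr, Finset.mem_filter] at this
        exact this.2
  have hvc : 𝒜.vcDim ≤ k := by
    refine Finset.sup_le fun s hs => ?_
    rw [Finset.mem_shatterer] at hs
    set A' : Finset X := s.map (Function.Embedding.subtype _) with hA'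
    have hcard : A'.card = s.card := Finset.card_map _
    rw [← hcard]
    refine hVC A' fun B hB => ?_
    rw [Finset.mem_powerset] at hB
    -- the corresponding subset of s
    set t : Finset α := s.filter (fun x => x.1 ∈ B) with ht
    obtain ⟨u, hu, hsu⟩ := hs (show t ⊆ s from Finset.filter_subset _ _)
    simp only [h𝒜, Finset.mem_filter, Finset.mem_univ, true_and] at hu
    obtain ⟨s₀, hs₀, rfl⟩ := hu
    refine ⟨s₀, hs₀, ?_⟩
    intro x hx
    simp only [hA', Finset.mem_map, Function.Embedding.coe_subtype] at hx
    obtain ⟨y, hy, rfl⟩ := hx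
    have h1 : y ∈ s ∩ tr s₀ ↔ y ∈ t := by rw [hsu]
    simp only [Finset.mem_inter, htr, Finset.mem_filter, Finset.mem_attach, true_and,
      ht] at h1
    constructor
    · intro hy0
      exact (h1.1 ⟨hy, hy0⟩).2
    · intro hyB
      exact (h1.2 ⟨hy, hyB⟩).2
  have key2 : 𝒜.card ≤ ∑ i ∈ Finset.range (k + 1), n.choose i := by
    calc 𝒜.card ≤ 𝒜.shatterer.card := Finset.card_le_card_shatterer _
    _ ≤ ∑ i ∈ Finset.Iic 𝒜.vcDim, (Fintype.card α).choose i :=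
        Finset.card_shatterer_le_sum_vcDim
    _ ≤ ∑ i ∈ Finset.Iic k, (Fintype.card α).choose i := by
        apply Finset.sum_le_sum_of_subset
        intro i hi
        simp only [Finset.mem_Iic] at *
        exact hi.trans hvc
    _ ≤ ∑ i ∈ Finset.range (k + 1), n.choose i := by
        rw [show Finset.range (k+1) = Finset.Iic k from by ext i; simp [Nat.lt_succ_iff]]
        refine Finset.sum_le_sum fun i _ => Nat.choose_le_choose _ ?_
        simpa [α] using hA
  exact key1.trans key2
end

section
/- Let G be a group and S a family of subgroups of G of finite index such that: (i) S has VC-dimension at most k as a family of subsets of G, (ii) the dual family has VC-dimension at most m (so any finite intersection of members of S of index ≤ n equals an intersection of at most m of them). Then the number of subgroups in S of index at most n is at most π(n^m), where π is the shatter function of S; in particular it is at most C·n^{km} for a constant C depending only on k. -/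
/-!
By Baldwin–Saxl, the dual VC bound makes every finite intersection of members of `S` of index
at most `n` an intersection of at most `m` of them, hence of index at most `n ^ m`. A finite
intersection `N` of maximal index is then contained in every member of `S` of index at most `n`,
and these members are determined by their traces on a transversal of `N`, which has at most
`n ^ m` elements. This bounds their number by the shatter function at `n ^ m`, and the
Sauer–Shelah lemma bounds that by `(k + 1) * n ^ (k * m)`.
-/

/-- The shatter function of a family `S` of subsets of `X`: the maximal number
of traces `s ∩ A` (`s ∈ S`) on a set `A` of size at most `t`. -/
noncomputable def shatterFn {X : Type*} (S : Set (Set X)) (t : ℕ) : ℕ :=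
  sSup {c : ℕ | ∃ A : Finset X, A.card ≤ t ∧
    c = {T : Set X | ∃ s ∈ S, T = s ∩ (A : Set X)}.ncard}

open Finset

section Traces

open scoped Classical

variable {X : Type*}

/-- Traces as a family of finsets, so that `Finset.shatterer` applies. -/
noncomputable def traceFinset (𝒮 : Set (Set X)) (A : Finset X) : Finset (Finset X) :=
  A.powerset.filter fun B => ∃ s ∈ 𝒮, s ∩ (A : Set X) = B

theorem traceFinset_subset_powerset (𝒮 : Set (Set X)) (A : Finset X) :
    traceFinset 𝒮 A ⊆ A.powerset :=
  filter_subset _ _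

theorem image_coe_traceFinset (𝒮 : Set (Set X)) (A : Finset X) :
    (fun B : Finset X => (B : Set X)) '' (traceFinset 𝒮 A : Set (Finset X)) =
      {T : Set X | ∃ s ∈ 𝒮, T = s ∩ (A : Set X)} := by
  ext T
  constructor
  · rintro ⟨B, hB, rfl⟩
    obtain ⟨s, hs, hsB⟩ := (mem_filter.1 hB).2
    exact ⟨s, hs, hsB.symm⟩
  · rintro ⟨s, hs, rfl⟩
    have hcoe : ((A.filter (· ∈ s) : Finset X) : Set X) = s ∩ A := by ext; simp [and_comm]
    exact ⟨_, mem_filter.2 ⟨mem_powerset.2 (filter_subset _ _), s, hs, hcoe.symm⟩, hcoe⟩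

theorem ncard_traces_eq_card_traceFinset (𝒮 : Set (Set X)) (A : Finset X) :
    {T : Set X | ∃ s ∈ 𝒮, T = s ∩ (A : Set X)}.ncard = (traceFinset 𝒮 A).card := by
  rw [← image_coe_traceFinset, Set.ncard_image_of_injective _ coe_injective, Set.ncard_coe_finset]

theorem shatterFn_eq (𝒮 : Set (Set X)) (t : ℕ) :
    shatterFn 𝒮 t = sSup {c : ℕ | ∃ A : Finset X, A.card ≤ t ∧ c = (traceFinset 𝒮 A).card} := by
  simp only [shatterFn, ncard_traces_eq_card_traceFinset]

theorem card_traceFinset_le_shatterFn (𝒮 : Set (Set X)) {A : Finset X} {t : ℕ}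
    (hA : A.card ≤ t) : (traceFinset 𝒮 A).card ≤ shatterFn 𝒮 t := by
  rw [shatterFn_eq]
  refine le_csSup ⟨2 ^ t, ?_⟩ ⟨A, hA, rfl⟩
  rintro c ⟨A', hA', rfl⟩
  calc (traceFinset 𝒮 A').card ≤ A'.powerset.card :=
        card_le_card (traceFinset_subset_powerset 𝒮 A')
    _ = 2 ^ A'.card := card_powerset A'
    _ ≤ 2 ^ t := Nat.pow_le_pow_right two_pos hA'

theorem shatterFn_le {𝒮 : Set (Set X)} {t c : ℕ}
    (h : ∀ A : Finset X, A.card ≤ t → (traceFinset 𝒮 A).card ≤ c) : shatterFn 𝒮 t ≤ c := by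
  rw [shatterFn_eq]
  exact csSup_le' (by rintro _ ⟨A, hA, rfl⟩; exact h A hA)

theorem subset_and_card_le_of_shatters_traceFinset {𝒮 : Set (Set X)} {k : ℕ}
    (hVC : ∀ A : Finset X,
      (∀ B ∈ A.powerset, ∃ s ∈ 𝒮, ∀ x ∈ A, (x ∈ s ↔ x ∈ B)) → A.card ≤ k)
    {A s : Finset X} (hs : (traceFinset 𝒮 A).Shatters s) : s ⊆ A ∧ s.card ≤ k := by
  have hsA : s ⊆ A := by
    obtain ⟨u, hu, hsu⟩ := hs.exists_superset
    exact hsu.trans (mem_powerset.1 (traceFinset_subset_powerset 𝒮 A hu))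
  refine ⟨hsA, hVC s fun B hB => ?_⟩
  obtain ⟨u, hu, hsu⟩ := hs (mem_powerset.1 hB)
  obtain ⟨t, ht, htu⟩ := (mem_filter.1 hu).2
  refine ⟨t, ht, fun x hx => ?_⟩
  have hxu : x ∈ u ↔ x ∈ t := by rw [← mem_coe, ← htu]; simp [hsA hx]
  rw [← hsu, mem_inter, hxu]
  simp [hx]

theorem card_traceFinset_le_sum_choose {𝒮 : Set (Set X)} {k : ℕ}
    (hVC : ∀ A : Finset X,
      (∀ B ∈ A.powerset, ∃ s ∈ 𝒮, ∀ x ∈ A, (x ∈ s ↔ x ∈ B)) → A.card ≤ k)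
    (A : Finset X) : (traceFinset 𝒮 A).card ≤ ∑ i ∈ range (k + 1), A.card.choose i := by
  have hsub : (traceFinset 𝒮 A).shatterer ⊆ (range (k + 1)).biUnion (A.powersetCard ·) := by
    intro s hs
    obtain ⟨hsA, hsk⟩ := subset_and_card_le_of_shatters_traceFinset hVC (mem_shatterer.1 hs)
    exact mem_biUnion.2 ⟨s.card, mem_range.2 (Nat.lt_succ_of_le hsk), mem_powersetCard.2 ⟨hsA, rfl⟩⟩
  calc (traceFinset 𝒮 A).card ≤ (traceFinset 𝒮 A).shatterer.card := card_le_card_shatterer _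
    _ ≤ ((range (k + 1)).biUnion (A.powersetCard ·)).card := card_le_card hsub
    _ ≤ ∑ i ∈ range (k + 1), (A.powersetCard i).card := card_biUnion_le
    _ = ∑ i ∈ range (k + 1), A.card.choose i := by simp only [card_powersetCard]

theorem shatterFn_le_sum_choose {𝒮 : Set (Set X)} {k : ℕ}
    (hVC : ∀ A : Finset X,
      (∀ B ∈ A.powerset, ∃ s ∈ 𝒮, ∀ x ∈ A, (x ∈ s ↔ x ∈ B)) → A.card ≤ k)
    (t : ℕ) : shatterFn 𝒮 t ≤ ∑ i ∈ range (k + 1), t.choose i :=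
  shatterFn_le fun A hA => (card_traceFinset_le_sum_choose hVC A).trans <|
    sum_le_sum fun i _ => Nat.choose_le_choose i hA

end Traces

theorem Nat.sum_range_choose_le_mul_pow {t : ℕ} (ht : 1 ≤ t) (k : ℕ) :
    ∑ i ∈ range (k + 1), t.choose i ≤ (k + 1) * t ^ k := by
  calc ∑ i ∈ range (k + 1), t.choose i ≤ ∑ _i ∈ range (k + 1), t ^ k :=
        sum_le_sum fun i hi => (Nat.choose_le_pow t i).trans <|
          Nat.pow_le_pow_right ht (Nat.lt_succ_iff.1 (mem_range.1 hi))
    _ = (k + 1) * t ^ k := by rw [sum_const, card_range, smul_eq_mul]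

namespace Subgroup

variable {G : Type*} [Group G]

theorem index_finset_inf_ne_zero {ι : Type*} {s : Finset ι} {f : ι → Subgroup G}
    (h : ∀ i ∈ s, (f i).index ≠ 0) : (s.inf f).index ≠ 0 :=
  inf_induction (p := fun K : Subgroup G => K.index ≠ 0) (by simp)
    (fun _ h₁ _ h₂ => index_inf_ne_zero h₁ h₂) h

theorem index_finset_inf_le_prod {ι : Type*} (s : Finset ι) (f : ι → Subgroup G) :
    (s.inf f).index ≤ ∏ i ∈ s, (f i).index := by
  induction s using Finset.cons_induction with
  | empty => simp
  | cons i s hi ih =>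
    rw [inf_cons, prod_cons]
    exact index_inf_le.trans (Nat.mul_le_mul_left _ ih)

/-- The element is a product of witnesses `x_H ∈ (⋂_{K ∈ B, K ≠ H} K) \ H`, one for each
`H ∈ C`. -/
theorem exists_forall_mem_iff_notMem_of_not_inf_erase_le [DecidableEq (Subgroup G)]
    {B : Finset (Subgroup G)} (hB : ∀ H ∈ B, ¬ (B.erase H).inf id ≤ H) :
    ∀ C ⊆ B, ∃ g : G, ∀ K ∈ B, (g ∈ K ↔ K ∉ C) := by
  intro C
  induction C using Finset.induction_on with
  | empty => exact fun _ => ⟨1, fun K _ => by simp [one_mem]⟩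
  | @insert H C hHC ih =>
    intro hsub
    obtain ⟨g, hg⟩ := ih ((subset_insert H C).trans hsub)
    obtain ⟨x, hx, hxH⟩ := Set.not_subset.1 (hB H (hsub (mem_insert_self H C)))
    refine ⟨x * g, fun K hK => ?_⟩
    rcases eq_or_ne K H with rfl | hKH
    · rw [mul_mem_cancel_right ((hg K hK).2 hHC)]
      simpa using hxH
    · have hxK : x ∈ K := inf_le (f := id) (mem_erase.2 ⟨hKH, hK⟩) hx
      rw [mul_mem_cancel_left hxK, hg K hK]
      simp [hKH]

/-- Baldwin–Saxl: a subfamily of `B` of minimal size with the same intersection is irredundant,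
hence dually shattered. -/
theorem exists_subset_card_le_inf_eq {S : Set (Subgroup G)} {m : ℕ}
    (hdual : ∀ A : Finset (Subgroup G), (A : Set (Subgroup G)) ⊆ S →
      (∀ B ∈ A.powerset, ∃ x : G, ∀ H ∈ A, (x ∈ H ↔ H ∈ B)) → A.card ≤ m)
    {B : Finset (Subgroup G)} (hBS : (B : Set (Subgroup G)) ⊆ S) :
    ∃ B' ⊆ B, B'.card ≤ m ∧ B'.inf id = B.inf id := by
  classical
  obtain ⟨B', hB', hmin⟩ := exists_min_image
    (B.powerset.filter fun B' => B'.inf id = B.inf id) card ⟨B, by simp⟩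
  rw [mem_filter, mem_powerset] at hB'
  obtain ⟨hB'B, hinf⟩ := hB'
  have hirred : ∀ H ∈ B', ¬ (B'.erase H).inf id ≤ H := by
    intro H hH hle
    have herase : (B'.erase H).inf id = B'.inf id := by
      conv_rhs => rw [← insert_erase hH]
      rw [inf_insert, id, inf_eq_right.2 hle]
    have hcard := hmin (B'.erase H) (mem_filter.2
      ⟨mem_powerset.2 ((erase_subset H B').trans hB'B), herase.trans hinf⟩)
    exact (card_erase_lt_of_mem hH).not_ge hcard
  refine ⟨B', hB'B, hdual B' (fun H hH => hBS (hB'B hH)) fun C hC => ?_, hinf⟩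
  obtain ⟨g, hg⟩ := exists_forall_mem_iff_notMem_of_not_inf_erase_le hirred (B' \ C) sdiff_subset
  exact ⟨g, fun H hH => by simp [hg H hH, hH]⟩

theorem index_finset_inf_le_pow_of_dual {S : Set (Subgroup G)} {m : ℕ}
    (hdual : ∀ A : Finset (Subgroup G), (A : Set (Subgroup G)) ⊆ S →
      (∀ B ∈ A.powerset, ∃ x : G, ∀ H ∈ A, (x ∈ H ↔ H ∈ B)) → A.card ≤ m)
    {n : ℕ} (hn : 1 ≤ n) {B : Finset (Subgroup G)} (hBS : (B : Set (Subgroup G)) ⊆ S)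
    (hBn : ∀ H ∈ B, H.index ≤ n) : (B.inf id).index ≤ n ^ m := by
  obtain ⟨B', hB'B, hcard, hinf⟩ := exists_subset_card_le_inf_eq hdual hBS
  calc (B.inf id).index = (B'.inf id).index := by rw [hinf]
    _ ≤ ∏ H ∈ B', H.index := index_finset_inf_le_prod B' id
    _ ≤ n ^ B'.card := prod_le_pow_card B' _ n fun H hH => hBn H (hB'B hH)
    _ ≤ n ^ m := Nat.pow_le_pow_right hn hcard

/-- Take a finite intersection of maximal index: intersecting it with a further member of `F`
cannot increase its index, so does not shrink it. -/
theorem exists_finset_inf_le_of_index_le {F : Set (Subgroup G)} (hfin : ∀ H ∈ F, H.index ≠ 0)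
    {t : ℕ} (hbdd : ∀ B : Finset (Subgroup G), (B : Set (Subgroup G)) ⊆ F → (B.inf id).index ≤ t) :
    ∃ B : Finset (Subgroup G), (B : Set (Subgroup G)) ⊆ F ∧ ∀ H ∈ F, B.inf id ≤ H := by
  classical
  set D : Set ℕ := {c | ∃ B : Finset (Subgroup G), (B : Set (Subgroup G)) ⊆ F ∧
    (B.inf id).index = c}
  have hD : BddAbove D := ⟨t, by rintro _ ⟨B, hB, rfl⟩; exact hbdd B hB⟩
  have hDne : D.Nonempty := by use (⊤ : Subgroup G).index, ∅; simp
  obtain ⟨B, hBF, hBmax⟩ := Nat.sSup_mem hDne hD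
  refine ⟨B, hBF, fun H hH => ?_⟩
  have hins : ((insert H B : Finset (Subgroup G)) : Set (Subgroup G)) ⊆ F := by
    rw [coe_insert]; exact Set.insert_subset hH hBF
  have : (H ⊓ B.inf id).FiniteIndex := by
    have := index_finset_inf_ne_zero (s := insert H B) (f := id) fun K hK => hfin K (hins hK)
    rw [inf_insert] at this
    exact ⟨this⟩
  have hle : (H ⊓ B.inf id).index ≤ (B.inf id).index := by
    have := le_csSup hD ⟨insert H B, hins, rfl⟩
    rwa [← hBmax, inf_insert] at this
  have hnlt : ¬ H ⊓ B.inf id < B.inf id := fun hlt => (index_strictAnti hlt).not_ge hle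
  exact inf_eq_right.1 (eq_of_le_of_not_lt inf_le_right hnlt)

theorem le_of_inter_subset {N H K : Subgroup G} {A : Set G} (hA : ∀ g : G, ∃ a ∈ A, a⁻¹ * g ∈ N)
    (hNH : N ≤ H) (hNK : N ≤ K) (h : (H : Set G) ∩ A ⊆ K) : H ≤ K := by
  intro g hg
  obtain ⟨a, haA, ha⟩ := hA g
  have haH : a ∈ H := by simpa using H.mul_mem hg (H.inv_mem (hNH ha))
  simpa using K.mul_mem (h ⟨haH, haA⟩) (hNK ha)

/-- `A` is a set of representatives of the left cosets of `N`. -/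
theorem exists_finset_card_le_index_injOn_inter (N : Subgroup G) [N.FiniteIndex] :
    ∃ A : Finset G, A.card ≤ N.index ∧
      Set.InjOn (fun H : Subgroup G => (H : Set G) ∩ A) {H | N ≤ H} := by
  classical
  have := Fintype.ofFinite (G ⧸ N)
  refine ⟨(univ : Finset (G ⧸ N)).image Quotient.out, ?_, fun H₁ h₁ H₂ h₂ h => ?_⟩
  · calc ((univ : Finset (G ⧸ N)).image Quotient.out).card ≤ (univ : Finset (G ⧸ N)).card :=
          card_image_le
      _ = N.index := by rw [card_univ, index, Nat.card_eq_fintype_card]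
  · have hA : ∀ g : G, ∃ a ∈ (univ : Finset (G ⧸ N)).image Quotient.out, a⁻¹ * g ∈ N := fun g =>
      ⟨_, mem_image_of_mem _ (mem_univ (g : G ⧸ N)), QuotientGroup.eq.1 (Quotient.out_eq _)⟩
    have h : (H₁ : Set G) ∩ _ = (H₂ : Set G) ∩ _ := h
    exact le_antisymm (le_of_inter_subset hA h₁ h₂ (h.le.trans Set.inter_subset_left))
      (le_of_inter_subset hA h₂ h₁ (h.ge.trans Set.inter_subset_left))

theorem ncard_le_shatterFn_of_index_finset_inf_le {S F : Set (Subgroup G)} (hFS : F ⊆ S)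
    (hfin : ∀ H ∈ F, H.index ≠ 0) {t : ℕ}
    (hbdd : ∀ B : Finset (Subgroup G), (B : Set (Subgroup G)) ⊆ F → (B.inf id).index ≤ t) :
    F.ncard ≤ shatterFn ((fun H : Subgroup G => (H : Set G)) '' S) t := by
  obtain ⟨B, hBF, hB⟩ := exists_finset_inf_le_of_index_le hfin hbdd
  have : (B.inf id).FiniteIndex := ⟨index_finset_inf_ne_zero fun H hH => hfin H (hBF hH)⟩
  obtain ⟨A, hAcard, hinj⟩ := exists_finset_card_le_index_injOn_inter (B.inf id)
  calc F.ncard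
      ≤ {T : Set G | ∃ s ∈ (fun H : Subgroup G => (H : Set G)) '' S, T = s ∩ A}.ncard := by
        refine Set.ncard_le_ncard_of_injOn _ (fun H hH => ⟨H, ⟨H, hFS hH, rfl⟩, rfl⟩)
          (hinj.mono hB) ?_
        rw [← image_coe_traceFinset]
        exact (traceFinset _ A).finite_toSet.image _
    _ = (traceFinset _ A).card := ncard_traces_eq_card_traceFinset _ A
    _ ≤ shatterFn _ t := card_traceFinset_le_shatterFn _ (hAcard.trans (hbdd B hBF))

end Subgroup

/-- Polynomial subgroup growth for NIP (finite VC-dimension) families of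
subgroups: if a family `S` of finite index subgroups of `G` has VC-dimension at
most `k` and its dual family has VC-dimension at most `m`, then the number of
subgroups in `S` of index at most `n` is bounded by the shatter function
evaluated at `n ^ m`, and in particular by `C * n ^ (k * m)` for some
constant `C` depending only on `k`. -/
theorem nip_polynomial_subgroup_growth
    (G : Type*) [Group G] (S : Set (Subgroup G)) (k m : ℕ)
    (hfin : ∀ H ∈ S, H.index ≠ 0)
    (hVC : ∀ A : Finset G,
      (∀ B ∈ A.powerset, ∃ H ∈ S, ∀ x ∈ A, (x ∈ H ↔ x ∈ B)) → A.card ≤ k)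
    (hdual : ∀ A : Finset (Subgroup G), (A : Set (Subgroup G)) ⊆ S →
      (∀ B ∈ A.powerset, ∃ x : G, ∀ H ∈ A, (x ∈ H ↔ H ∈ B)) → A.card ≤ m) :
    (∀ n : ℕ, {H : Subgroup G | H ∈ S ∧ H.index ≤ n}.ncard ≤
        shatterFn ((fun H : Subgroup G => (H : Set G)) '' S) (n ^ m)) ∧
      ∃ C : ℕ, ∀ n : ℕ, {H : Subgroup G | H ∈ S ∧ H.index ≤ n}.ncard ≤
        C * n ^ (k * m) := by
  have hzero : {H : Subgroup G | H ∈ S ∧ H.index ≤ 0} = ∅ :=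
    Set.eq_empty_of_forall_notMem fun H hH => hfin H hH.1 (Nat.le_zero.1 hH.2)
  have hgrowth : ∀ n, 1 ≤ n → {H : Subgroup G | H ∈ S ∧ H.index ≤ n}.ncard ≤
      shatterFn ((fun H : Subgroup G => (H : Set G)) '' S) (n ^ m) := fun n hn =>
    Subgroup.ncard_le_shatterFn_of_index_finset_inf_le (fun _ hH => hH.1)
      (fun H hH => hfin H hH.1) fun B hB =>
        Subgroup.index_finset_inf_le_pow_of_dual hdual hn (fun H hH => (hB hH).1)
          fun H hH => (hB hH).2
  have hVC' : ∀ A : Finset G, (∀ B ∈ A.powerset, ∃ s ∈ (fun H : Subgroup G => (H : Set G)) '' S,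
      ∀ x ∈ A, (x ∈ s ↔ x ∈ B)) → A.card ≤ k := fun A hA =>
    hVC A fun B hB => by
      obtain ⟨_, ⟨H, hH, rfl⟩, hHB⟩ := hA B hB
      exact ⟨H, hH, hHB⟩
  refine ⟨fun n => ?_, k + 1, fun n => ?_⟩ <;> rcases Nat.eq_zero_or_pos n with rfl | hn
  · rw [hzero, Set.ncard_empty]; exact Nat.zero_le _
  · exact hgrowth n hn
  · rw [hzero, Set.ncard_empty]; exact Nat.zero_le _
  · calc {H : Subgroup G | H ∈ S ∧ H.index ≤ n}.ncard
        ≤ shatterFn ((fun H : Subgroup G => (H : Set G)) '' S) (n ^ m) := hgrowth n hn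
      _ ≤ ∑ i ∈ range (k + 1), (n ^ m).choose i := shatterFn_le_sum_choose hVC' _
      _ ≤ (k + 1) * (n ^ m) ^ k := Nat.sum_range_choose_le_mul_pow (Nat.one_le_pow _ _ hn) k
      _ = (k + 1) * n ^ (k * m) := by rw [← pow_mul, mul_comm m k]
end
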